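/- arXiv:1110.3314 — 6 statements merged into one kernel-verified Lean document; each statement's English description precedes it below -/
import Mathlib

section
/- Every pin sequence is an indecomposable matching: if a matching on [2n] can be listed as a sequence of edges p_1, p_2, ..., p_n such that for each i ≥ 2, the edge p_i splits the shadow of {p_1, ..., p_{i-1}}, then the matching has no nontrivial interval. -/
/-- Two edges `e = {e.1, e.2}` and `f = {f.1, f.2}` (each written with smaller
endpoint first) cross. -/
def Crosses (e f : ℕ × ℕ) : Prop :=
  (e.1 < f.1 ∧ f.1 < e.2 ∧ e.2 < f.2) ∨ (f.1 < e.1 ∧ e.1 < f.2 ∧ f.2 < e.2)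

/-- `E` is (the edge set of) a complete matching on `[2n] = {1,…,2n}`:
every edge is written `(a,b)` with `a < b`, and every vertex is covered
by exactly one edge. -/
def IsMatching (n : ℕ) (E : Finset (ℕ × ℕ)) : Prop :=
  (∀ e ∈ E, 1 ≤ e.1 ∧ e.1 < e.2 ∧ e.2 ≤ 2 * n) ∧
  (∀ v ∈ Finset.Icc 1 (2 * n), ∃! e, e ∈ E ∧ (v = e.1 ∨ v = e.2))

/-- The segment `[i,j]` is an interval of the matching `E`: no edge has one
endpoint inside and one outside. -/
def IsInterval (E : Finset (ℕ × ℕ)) (i j : ℕ) : Prop :=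
  ∀ e ∈ E, (i ≤ e.1 ∧ e.1 ≤ j) ↔ (i ≤ e.2 ∧ e.2 ≤ j)

/-- A matching on `[2n]` is indecomposable when its only nonempty interval is
all of `[1, 2n]`. -/
def Indecomposable (n : ℕ) (E : Finset (ℕ × ℕ)) : Prop :=
  ∀ i j : ℕ, 1 ≤ i → i ≤ j → j ≤ 2 * n → IsInterval E i j → i = 1 ∧ j = 2 * n

/-- `v` is in the shadow of the (nonempty) list of edges `L`, i.e. in the
smallest contiguous segment containing all endpoints of edges of `L`. -/
def InShadow (L : List (ℕ × ℕ)) (v : ℕ) : Prop :=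
  (∃ a ∈ L, a.1 ≤ v) ∧ (∃ b ∈ L, v ≤ b.2)

/-- The edge `e` splits the shadow of the edges in `L`: exactly one of its
endpoints lies in the shadow. -/
def SplitsL (e : ℕ × ℕ) (L : List (ℕ × ℕ)) : Prop :=
  Xor' (InShadow L e.1) (InShadow L e.2)

/-- `L` is a pin sequence: each edge after the first splits the shadow of the
preceding ones. -/
def IsPinSeq (L : List (ℕ × ℕ)) : Prop :=
  ∀ i (h : i < L.length), 0 < i → SplitsL (L.get ⟨i, h⟩) (L.take i)

/-- A proper pin sequence: additionally, `p_{i+1}` does not split the shadow of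
`p_1, …, p_{i-1}`. -/
def IsProperPinSeq (L : List (ℕ × ℕ)) : Prop :=
  IsPinSeq L ∧ ∀ i (h : i < L.length), 2 ≤ i → ¬ SplitsL (L.get ⟨i, h⟩) (L.take (i - 1))

/-- The interleaving with `k` edges: the matching on `[2k]` with edges `i ~ i+k`. -/
def Interleaving (k : ℕ) : Finset (ℕ × ℕ) :=
  (Finset.Icc 1 k).image fun i => (i, i + k)

/-- The right-broken nesting with `k` edges: `k ~ 2k` and `i ~ 2k - i` for `i ∈ [k-1]`. -/
def RightBrokenNesting (k : ℕ) : Finset (ℕ × ℕ) :=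
  insert (k, 2 * k) ((Finset.Icc 1 (k - 1)).image fun i => (i, 2 * k - i))

/-- The left-broken nesting with `k` edges: `1 ~ k+1` and `i+1 ~ 2k - i + 1` for `i ∈ [k-1]`. -/
def LeftBrokenNesting (k : ℕ) : Finset (ℕ × ℕ) :=
  insert (1, k + 1) ((Finset.Icc 1 (k - 1)).image fun i => (i + 1, 2 * k - i + 1))

/-- The matching `E` contains the pattern matching `F` (deleting edges and
order-isomorphic relabeling). -/
def Contains (E F : Finset (ℕ × ℕ)) : Prop :=
  ∃ φ : ℕ → ℕ, StrictMono φ ∧ ∀ f ∈ F, (φ f.1, φ f.2) ∈ E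

/-- `v` is in the shadow of the finite set of edges `S`. -/
def InShadowF (S : Finset (ℕ × ℕ)) (v : ℕ) : Prop :=
  (∃ a ∈ S, a.1 ≤ v) ∧ (∃ b ∈ S, v ≤ b.2)

theorem stmt0 (n : ℕ) (hn : 1 ≤ n) (E : Finset (ℕ × ℕ)) (L : List (ℕ × ℕ))
    (hM : IsMatching n E) (hset : L.toFinset = E) (hnodup : L.Nodup)
    (hlen : L.length = n) (hpin : IsPinSeq L) :
    ∀ i j : ℕ, 1 ≤ i → i ≤ j → j ≤ 2 * n → IsInterval E i j → i = 1 ∧ j = 2 * n := by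
  intro i j hi hij hj hIJ
  classical
  obtain ⟨hbd, hcov⟩ := hM
  have hmemE : ∀ a ∈ L, a ∈ E := by
    intro a ha; rw [← hset]; exact List.mem_toFinset.mpr ha
  -- indexing of elements of take
  have htake : ∀ m : ℕ, ∀ a ∈ L.take m, ∃ k, ∃ hk : k < L.length, k < m ∧ L[k] = a := by
    intro m a ha
    obtain ⟨k, hk, hka⟩ := List.getElem_of_mem ha
    have hk' : k < min m L.length := by simpa using hk
    exact ⟨k, lt_of_lt_of_le hk' (min_le_right _ _),
      lt_of_lt_of_le hk' (min_le_left _ _), by rw [← hka]; exact List.getElem_take.symm⟩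
  -- Inside: both endpoints in [i,j]; for edges of E it suffices to check e.1
  have hIn2 : ∀ e ∈ E, (i ≤ e.1 ∧ e.1 ≤ j) → (i ≤ e.2 ∧ e.2 ≤ j) := fun e he h => (hIJ e he).mp h
  have hOut2 : ∀ e ∈ E, ¬(i ≤ e.1 ∧ e.1 ≤ j) → ¬(i ≤ e.2 ∧ e.2 ≤ j) := by
    intro e he h; exact fun h2 => h ((hIJ e he).mpr h2)
  -- the edge covering vertex i is inside
  have hiIcc : i ∈ Finset.Icc 1 (2 * n) := Finset.mem_Icc.mpr ⟨hi, le_trans hij hj⟩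
  obtain ⟨e0, ⟨he0E, he0v⟩, -⟩ := hcov i hiIcc
  have he0in : i ≤ e0.1 ∧ e0.1 ≤ j := by
    obtain ⟨h1, h2, h3⟩ := hbd e0 he0E
    rcases he0v with h | h
    · omega
    · exact (hIJ e0 he0E).mpr ⟨by omega, by omega⟩
  -- minimal index of an inside edge
  set P : ℕ → Prop := fun m => ∃ hm : m < L.length, i ≤ (L[m]).1 ∧ (L[m]).1 ≤ j with hP
  have hPex : ∃ m, P m := by
    have : e0 ∈ L := by rw [← List.mem_toFinset, hset]; exact he0E
    obtain ⟨k, hk, hka⟩ := List.getElem_of_mem this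
    exact ⟨k, hk, by rw [hka]; exact he0in⟩
  have hspec := Nat.find_spec hPex
  set m := Nat.find hPex with hm
  -- Step A: m = 0
  have hm0 : m = 0 := by
    by_contra hm0
    have hmpos : 0 < m := Nat.pos_of_ne_zero hm0
    obtain ⟨hmlt, hin⟩ := hspec
    have hsplit := hpin m hmlt hmpos
    set p := L[m] with hpdef
    have hpE : p ∈ E := hmemE _ (List.getElem_mem hmlt)
    have hp2 : i ≤ p.2 ∧ p.2 ≤ j := hIn2 p hpE (by simpa [List.get_eq_getElem] using hin)
    have hp12 : p.1 < p.2 := (hbd p hpE).2.1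
    -- all edges in take m are outside
    have hout : ∀ a ∈ L.take m, ¬(i ≤ a.1 ∧ a.1 ≤ j) ∧ ¬(i ≤ a.2 ∧ a.2 ≤ j) := by
      intro a ha
      obtain ⟨k, hk, hkm, hka⟩ := htake m a ha
      have hnot : ¬ P k := Nat.find_min hPex hkm
      have h1 : ¬(i ≤ a.1 ∧ a.1 ≤ j) := by
        intro h; exact hnot ⟨hk, by rw [hka]; exact h⟩
      exact ⟨h1, hOut2 a (hmemE a (List.mem_of_mem_take ha)) h1⟩
    simp only [SplitsL, Xor', List.get_eq_getElem, ← hpdef] at hsplit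
    rcases hsplit with ⟨⟨⟨a, ha, ha1⟩, ⟨b, hb, hb2⟩⟩, hnot⟩ | ⟨⟨⟨a, ha, ha1⟩, ⟨b, hb, hb2⟩⟩, hnot⟩
    · -- p.1 in shadow, p.2 not
      have hA : ∃ a ∈ L.take m, a.1 ≤ p.2 := ⟨a, ha, le_trans ha1 (le_of_lt hp12)⟩
      have hB : ¬ ∃ b ∈ L.take m, p.2 ≤ b.2 := by
        intro hB; exact hnot ⟨hA, hB⟩
      push_neg at hB
      have hb2' : b.2 < p.2 := hB b hb
      have := (hout b hb).2
      have hin1 : i ≤ p.1 ∧ p.1 ≤ j := by simpa [List.get_eq_getElem] using hin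
      omega
    · -- p.2 in shadow, p.1 not
      have hB : ∃ b ∈ L.take m, p.1 ≤ b.2 := ⟨b, hb, le_trans (le_of_lt hp12) hb2⟩
      have hA : ¬ ∃ a ∈ L.take m, a.1 ≤ p.1 := by
        intro hA; exact hnot ⟨hA, hB⟩
      push_neg at hA
      have ha1' : p.1 < a.1 := hA a ha
      have := (hout a ha).1
      have hin1 : i ≤ p.1 ∧ p.1 ≤ j := by simpa [List.get_eq_getElem] using hin
      omega
  -- Step B: every edge is inside
  have hall : ∀ k, ∀ hk : k < L.length, i ≤ (L[k]).1 ∧ (L[k]).1 ≤ j := by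
    intro k
    induction k using Nat.strong_induction_on with
    | _ k ih =>
      intro hk
      rcases Nat.eq_zero_or_pos k with rfl | hkpos
      · obtain ⟨hm1, hin⟩ : P 0 := hm0 ▸ hspec
        exact hin
      · have hsplit := hpin k hk hkpos
        set p := L[k] with hpdef
        have hpE : p ∈ E := hmemE _ (List.getElem_mem hk)
        -- all earlier edges inside
        have hins : ∀ a ∈ L.take k, (i ≤ a.1 ∧ a.1 ≤ j) ∧ (i ≤ a.2 ∧ a.2 ≤ j) := by
          intro a ha
          obtain ⟨k', hk', hk'k, hka⟩ := htake k a ha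
          have h1 := ih k' hk'k hk'
          rw [hka] at h1
          exact ⟨h1, hIn2 a (hmemE a (List.mem_of_mem_take ha)) h1⟩
        simp only [SplitsL, Xor', List.get_eq_getElem, ← hpdef] at hsplit
        have key : ∀ v, InShadow (L.take k) v → i ≤ v ∧ v ≤ j := by
          rintro v ⟨⟨a, ha, ha1⟩, ⟨b, hb, hb2⟩⟩
          have h1 := (hins a ha).1
          have h2 := (hins b hb).2
          omega
        rcases hsplit with ⟨h1, -⟩ | ⟨h2, -⟩
        · exact key p.1 h1
        · have := key p.2 h2
          exact (hIJ p hpE).mpr this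
  -- conclude
  have hallE : ∀ e ∈ E, (i ≤ e.1 ∧ e.1 ≤ j) ∧ (i ≤ e.2 ∧ e.2 ≤ j) := by
    intro e he
    have : e ∈ L := by rw [← List.mem_toFinset, hset]; exact he
    obtain ⟨k, hk, hka⟩ := List.getElem_of_mem this
    have h1 := hall k hk
    rw [hka] at h1
    exact ⟨h1, hIn2 e he h1⟩
  obtain ⟨e1, ⟨he1E, he1v⟩, -⟩ := hcov 1 (Finset.mem_Icc.mpr ⟨le_refl 1, by omega⟩)
  obtain ⟨e2, ⟨he2E, he2v⟩, -⟩ := hcov (2 * n) (Finset.mem_Icc.mpr ⟨by omega, le_refl _⟩)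
  have h1 := hallE e1 he1E
  have h2 := hallE e2 he2E
  have hb1 := hbd e1 he1E
  have hb2 := hbd e2 he2E
  constructor
  · rcases he1v with h | h <;> omega
  · rcases he2v with h | h <;> omega
end

section
/- If a matching contains a single edge e that is crossed by at least 2(k-1)^2 + 2 distinct edges, then the matching contains either a broken nesting with k edges or an interleaving with k edges. -/
section AuxES
variable {α : Type*} [LinearOrder α]
open Function Finset

theorem aux_erdos_szekeres {r s n : ℕ} {f : Fin n → α} (hn : r * s < n) (hf : Injective f) :
    (∃ t : Finset (Fin n), r < t.card ∧ StrictMonoOn f ↑t) ∨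
      ∃ t : Finset (Fin n), s < t.card ∧ StrictAntiOn f ↑t := by
  let inc_sequences_ending_in : Fin n → Finset (Finset (Fin n)) := fun i =>
    univ.powerset.filter fun t => Finset.max t = i ∧ StrictMonoOn f ↑t
  let dec_sequences_ending_in : Fin n → Finset (Finset (Fin n)) := fun i =>
    univ.powerset.filter fun t => Finset.max t = i ∧ StrictAntiOn f ↑t
  have inc_i : ∀ i, {i} ∈ inc_sequences_ending_in i := fun i => by
    simp [inc_sequences_ending_in, StrictMonoOn]
  have dec_i : ∀ i, {i} ∈ dec_sequences_ending_in i := fun i => by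
    simp [dec_sequences_ending_in, StrictAntiOn]
  let ab' : Fin n → ℕ × ℕ := by
    intro i
    apply
      (max' ((inc_sequences_ending_in i).image card) (Nonempty.image ⟨{i}, inc_i i⟩ _),
        max' ((dec_sequences_ending_in i).image card) (Nonempty.image ⟨{i}, dec_i i⟩ _))
  generalize hab : ab' = ab
  rsuffices ⟨i, hi⟩ : ∃ i, r < (ab i).1 ∨ s < (ab i).2
  · refine Or.imp ?_ ?_ hi
    on_goal 1 =>
      have : (ab i).1 ∈ image card (inc_sequences_ending_in i) := by
        simp only [← hab]; exact max'_mem _ (Nonempty.image ⟨{i}, inc_i i⟩ _)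
    on_goal 2 =>
      have : (ab i).2 ∈ image card (dec_sequences_ending_in i) := by
        simp only [← hab]; exact max'_mem _ (Nonempty.image ⟨{i}, dec_i i⟩ _)
    all_goals
      intro hi
      rw [mem_image] at this
      obtain ⟨t, ht₁, ht₂⟩ := this
      refine ⟨t, by rwa [ht₂], ?_⟩
      rw [mem_filter] at ht₁
      apply ht₁.2.2
  have : Injective ab := by
    simp only [← hab]
    apply (fun h => (fun x y hxy => (lt_trichotomy x y).elim (fun l => absurd hxy (h x y l)) (fun o => o.elim id (fun l => absurd hxy.symm (h y x l)))) : (∀ x y, x < y → ab' x ≠ ab' y) → Injective ab')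
    intro i j k q
    injection q with q₁ q₂
    cases lt_or_gt_of_ne fun _ => ne_of_lt ‹i < j› (hf ‹f i = f j›)
    on_goal 1 =>
      apply ne_of_lt _ q₁
      have : (ab' i).1 ∈ image card (inc_sequences_ending_in i) := by exact max'_mem _ (Nonempty.image ⟨{i}, inc_i i⟩ _)
    on_goal 2 =>
      apply ne_of_lt _ q₂
      have : (ab' i).2 ∈ image card (dec_sequences_ending_in i) := by exact max'_mem _ (Nonempty.image ⟨{i}, dec_i i⟩ _)
    all_goals
      rw [Nat.lt_iff_add_one_le]
      apply le_max'
      rw [mem_image] at this ⊢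
      rcases this with ⟨t, ht₁, ht₂⟩
      rw [mem_filter] at ht₁
      have : t.max = i := by simp only [ht₁.2.1]
      refine ⟨insert j t, ?_, ?_⟩
      · rw [mem_filter]
        refine ⟨?_, ?_, ?_⟩
        · rw [mem_powerset]; apply subset_univ
        · convert max_insert (a := j) (s := t)
          rw [ht₁.2.1, max_eq_left]
          apply WithBot.coe_le_coe.mpr (le_of_lt ‹i < j›)
        simp only [StrictMonoOn, StrictAntiOn, coe_insert, Set.mem_insert_iff, mem_coe]
        rintro x ⟨rfl | _⟩ y ⟨rfl | _⟩ _
        · apply (irrefl _ ‹j < j›).elim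
        · exfalso
          apply not_le_of_gt (_root_.trans ‹i < j› ‹j < y›) (le_max_of_eq ‹y ∈ t› ‹t.max = i›)
        · first
          | apply lt_of_le_of_lt _ ‹f i < f j›
          | apply lt_of_lt_of_le ‹f j < f i› _
          rcases lt_or_eq_of_le (le_max_of_eq ‹x ∈ t› ‹t.max = i›) with (_ | rfl)
          · apply le_of_lt (ht₁.2.2 ‹x ∈ t› (mem_of_max ‹t.max = i›) ‹x < i›)
          · rfl
        · apply ht₁.2.2 ‹x ∈ t› ‹y ∈ t› ‹x < y›
      · rw [card_insert_of_notMem, ht₂]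
        intro
        apply not_le_of_gt ‹i < j› (le_max_of_eq ‹j ∈ t› ‹t.max = i›)
  by_contra! q
  let ran : Finset (ℕ × ℕ) := (range r).image Nat.succ ×ˢ (range s).image Nat.succ
  have : image ab univ ⊆ ran := by
    rintro ⟨x₁, x₂⟩
    simp only [ran, mem_image, exists_prop, mem_range, mem_univ, mem_product, true_and,
      Prod.ext_iff]
    rintro ⟨i, rfl, rfl⟩
    specialize q i
    have z : 1 ≤ (ab i).1 ∧ 1 ≤ (ab i).2 := by
      simp only [← hab]
      constructor <;>
        · apply le_max'
          rw [mem_image]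
          exact ⟨{i}, by solve_by_elim, card_singleton i⟩
    exact ⟨⟨(ab i).1 - 1, by omega⟩, (ab i).2 - 1, by omega⟩
  apply not_le_of_gt hn
  simpa [ran, Nat.succ_injective, card_image_of_injective, ‹Injective ab›] using card_le_card this

end AuxES

theorem contains_of_g {E pat : Finset (ℕ × ℕ)} (m : ℕ) (g : ℕ → ℕ)
    (hmono : ∀ i, 1 ≤ i → i < m → g i < g (i + 1)) (h1 : 1 ≤ g 1)
    (hpat : ∀ f ∈ pat, 1 ≤ f.1 ∧ f.1 ≤ m ∧ 1 ≤ f.2 ∧ f.2 ≤ m ∧ (g f.1, g f.2) ∈ E) :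
    Contains E pat := by
  have gmono : ∀ i j, 1 ≤ i → i < j → j ≤ m → g i < g j := by
    intro i j hi hij hjm
    induction j with
    | zero => omega
    | succ j ih =>
      rcases Nat.lt_or_ge i j with h | h
      · exact (ih h (by omega)).trans (hmono j (by omega) (by omega))
      · have hij' : i = j := by omega
        subst hij'
        exact hmono i hi (by omega)
  refine ⟨fun x => if x = 0 then 0 else if x ≤ m then g x else g m + (x - m), ?_, ?_⟩
  · apply strictMono_nat_of_lt_succ
    intro x
    rcases Nat.eq_zero_or_pos x with rfl | hx
    · rw [if_pos rfl, if_neg (by omega : ¬(0 : ℕ) + 1 = 0), show (0 : ℕ) + 1 = 1 from rfl]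
      by_cases h : 1 ≤ m
      · rw [if_pos h]; omega
      · rw [if_neg h]; omega
    · rw [if_neg (by omega : ¬x = 0), if_neg (by omega : ¬x + 1 = 0)]
      by_cases hx1 : x + 1 ≤ m
      · rw [if_pos (by omega : x ≤ m), if_pos hx1]
        exact hmono x hx (by omega)
      · by_cases hx2 : x ≤ m
        · rw [if_pos hx2, if_neg hx1]
          have hxm : x = m := by omega
          rw [hxm]
          omega
        · rw [if_neg hx2, if_neg hx1]
          omega
  · intro f hf
    obtain ⟨hf1, hf2, hf3, hf4, hf5⟩ := hpat f hf
    dsimp only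
    rw [if_neg (by omega : ¬f.1 = 0), if_neg (by omega : ¬f.2 = 0), if_pos hf2, if_pos hf4]
    exact hf5

theorem chain_extract {E : Finset (ℕ × ℕ)}
    (hfst : ∀ f ∈ E, ∀ g ∈ E, f.1 = g.1 → f = g)
    (hsnd : ∀ f ∈ E, ∀ g ∈ E, f.2 = g.2 → f = g)
    (T : Finset (ℕ × ℕ)) (hT : T ⊆ E) (K : ℕ) (hcard : (K - 1) * (K - 1) < T.card) :
    ∃ c : ℕ → ℕ × ℕ, (∀ j, j < K → c j ∈ T) ∧
      (∀ j j', j < j' → j' < K → (c j).1 < (c j').1) ∧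
      ((∀ j j', j < j' → j' < K → (c j).2 < (c j').2) ∨
        (∀ j j', j < j' → j' < K → (c j').2 < (c j).2)) := by
  classical
  have hAcard : (T.image Prod.fst).card = T.card :=
    Finset.card_image_of_injOn (fun f hf g hg h => hfst f (hT hf) g (hT hg) h)
  set A : Finset ℕ := T.image Prod.fst with hA
  have hch : ∀ i : Fin A.card, ∃ f ∈ T, f.1 = A.orderEmbOfFin rfl i := fun i =>
    Finset.mem_image.mp (A.orderEmbOfFin_mem rfl i)
  choose F hFT hF1 using hch
  have hFinj : Function.Injective F := by
    intro i j hij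
    have : A.orderEmbOfFin rfl i = A.orderEmbOfFin rfl j := by rw [← hF1 i, ← hF1 j, hij]
    exact (A.orderEmbOfFin rfl).injective this
  have hsecinj : Function.Injective fun i => (F i).2 := by
    intro i j hij
    exact hFinj (hsnd (F i) (hT (hFT i)) (F j) (hT (hFT j)) hij)
  have hn : (K - 1) * (K - 1) < A.card := by omega
  have hfirst : ∀ i j : Fin A.card, i < j → (F i).1 < (F j).1 := by
    intro i j hij
    rw [hF1 i, hF1 j]
    exact (A.orderEmbOfFin rfl).strictMono hij
  rcases aux_erdos_szekeres hn hsecinj with ⟨t, ht, hmono⟩ | ⟨t, ht, hanti⟩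
  · have htK : K ≤ t.card := by omega
    refine ⟨fun j => if h : j < K then F (t.orderEmbOfCardLe htK ⟨j, h⟩) else (0, 0),
      ?_, ?_, Or.inl ?_⟩
    · intro j hj
      dsimp only
      rw [dif_pos hj]
      exact hFT _
    · intro j j' hjj hj'
      dsimp only
      rw [dif_pos (show j < K by omega), dif_pos hj']
      exact hfirst _ _ ((t.orderEmbOfCardLe htK).strictMono (by exact Fin.mk_lt_mk.mpr hjj))
    · intro j j' hjj hj'
      dsimp only
      rw [dif_pos (show j < K by omega), dif_pos hj']
      exact hmono (Finset.mem_coe.mpr (t.orderEmbOfCardLe_mem htK _))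
        (Finset.mem_coe.mpr (t.orderEmbOfCardLe_mem htK _))
        ((t.orderEmbOfCardLe htK).strictMono (by exact Fin.mk_lt_mk.mpr hjj))
  · have htK : K ≤ t.card := by omega
    refine ⟨fun j => if h : j < K then F (t.orderEmbOfCardLe htK ⟨j, h⟩) else (0, 0),
      ?_, ?_, Or.inr ?_⟩
    · intro j hj
      dsimp only
      rw [dif_pos hj]
      exact hFT _
    · intro j j' hjj hj'
      dsimp only
      rw [dif_pos (show j < K by omega), dif_pos hj']
      exact hfirst _ _ ((t.orderEmbOfCardLe htK).strictMono (by exact Fin.mk_lt_mk.mpr hjj))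
    · intro j j' hjj hj'
      dsimp only
      rw [dif_pos (show j < K by omega), dif_pos hj']
      exact hanti (Finset.mem_coe.mpr (t.orderEmbOfCardLe_mem htK _))
        (Finset.mem_coe.mpr (t.orderEmbOfCardLe_mem htK _))
        ((t.orderEmbOfCardLe htK).strictMono (by exact Fin.mk_lt_mk.mpr hjj))

theorem stmt1 (n k : ℕ) (E : Finset (ℕ × ℕ)) (hM : IsMatching n E)
    (e : ℕ × ℕ) (he : e ∈ E) (S : Finset (ℕ × ℕ)) (hS : S ⊆ E) (heS : e ∉ S)
    (hcard : 2 * (k - 1) ^ 2 + 2 ≤ S.card) (hcross : ∀ f ∈ S, Crosses e f) :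
    Contains E (Interleaving k) ∨ Contains E (RightBrokenNesting k) ∨
      Contains E (LeftBrokenNesting k) := by
  classical
  rcases Nat.eq_zero_or_pos k with rfl | hk
  · left
    refine ⟨id, strictMono_id, ?_⟩
    intro f hf
    simp [Interleaving] at hf
  have hbE : 1 ≤ e.1 ∧ e.1 < e.2 ∧ e.2 ≤ 2 * n := hM.1 e he
  have hfst : ∀ f ∈ E, ∀ g ∈ E, f.1 = g.1 → f = g := by
    intro f hf g hg hfg
    have h1 := hM.1 f hf
    have h2 := hM.1 g hg
    obtain ⟨u, _, hu⟩ := hM.2 f.1 (Finset.mem_Icc.mpr ⟨h1.1, by omega⟩)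
    exact (hu f ⟨hf, Or.inl rfl⟩).trans (hu g ⟨hg, Or.inl hfg⟩).symm
  have hsnd : ∀ f ∈ E, ∀ g ∈ E, f.2 = g.2 → f = g := by
    intro f hf g hg hfg
    have h1 := hM.1 f hf
    have h2 := hM.1 g hg
    obtain ⟨u, _, hu⟩ := hM.2 f.2 (Finset.mem_Icc.mpr ⟨by omega, by omega⟩)
    exact (hu f ⟨hf, Or.inr rfl⟩).trans (hu g ⟨hg, Or.inr hfg⟩).symm
  have hsplit := Finset.card_filter_add_card_filter_not
    (s := S) (p := fun f => e.1 < f.1)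
  have hSRp : ∀ f ∈ S.filter (fun f => e.1 < f.1), e.1 < f.1 ∧ f.1 < e.2 ∧ e.2 < f.2 := by
    intro f hf
    rw [Finset.mem_filter] at hf
    rcases hcross f hf.1 with h | h
    · exact h
    · exact absurd hf.2 (by omega)
  have hSLp : ∀ f ∈ S.filter (fun f => ¬ e.1 < f.1), f.1 < e.1 ∧ e.1 < f.2 ∧ f.2 < e.2 := by
    intro f hf
    rw [Finset.mem_filter] at hf
    rcases hcross f hf.1 with h | h
    · exact absurd h.1 hf.2
    · exact h
  have hbig : (k - 1) ^ 2 + 1 ≤ (S.filter (fun f => e.1 < f.1)).card ∨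
      (k - 1) ^ 2 + 1 ≤ (S.filter (fun f => ¬ e.1 < f.1)).card := by omega
  rcases hbig with hbigR | hbigL
  -- ===================== RIGHT SIDE (edges f with e.1 < f.1 < e.2 < f.2) ================
  · have hTsub : S.filter (fun f => e.1 < f.1) ⊆ E := (Finset.filter_subset _ _).trans hS
    have hTcard : (k - 1 - 1) * (k - 1 - 1) < (S.filter (fun f => e.1 < f.1)).card := by
      refine lt_of_le_of_lt (Nat.mul_le_mul (Nat.sub_le _ _) (Nat.sub_le _ _)) ?_
      have := hbigR
      rw [pow_two] at this
      omega
    obtain ⟨c, hcT, hc1, hc2⟩ := chain_extract hfst hsnd _ hTsub (k - 1) hTcard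
    have hcE : ∀ j, j < k - 1 → c j ∈ E := fun j hj => hTsub (hcT j hj)
    have hcp : ∀ j, j < k - 1 → e.1 < (c j).1 ∧ (c j).1 < e.2 ∧ e.2 < (c j).2 :=
      fun j hj => hSRp _ (hcT j hj)
    rcases hc2 with hinc | hdec
    · -- interleaving
      left
      have build : ∀ g : ℕ → ℕ,
          g 1 = e.1 → (∀ i, 2 ≤ i → i ≤ k → g i = (c (i - 2)).1) →
          g (k + 1) = e.2 → (∀ i, k + 2 ≤ i → g i = (c (i - k - 2)).2) →
          Contains E (Interleaving k) := by
        intro g g1 gle gmid gri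
        refine contains_of_g (2 * k) g ?_ ?_ ?_
        · intro i hi1 hi2
          by_cases h1 : i = 1
          · subst h1
            rw [g1]
            by_cases hk1 : k = 1
            · rw [show (1 : ℕ) + 1 = k + 1 by omega, gmid]
              exact hbE.2.1
            · rw [gle (1 + 1) (by omega) (by omega)]
              exact (hcp (1 + 1 - 2) (by omega)).1
          by_cases h2 : i + 1 ≤ k
          · rw [gle i (by omega) (by omega), gle (i + 1) (by omega) h2]
            exact hc1 (i - 2) (i + 1 - 2) (by omega) (by omega)
          by_cases h3 : i = k
          · rw [h3, gle k (by omega) le_rfl, gmid]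
            exact (hcp (k - 2) (by omega)).2.1
          by_cases h4 : i = k + 1
          · rw [h4, gmid, gri (k + 1 + 1) (by omega)]
            exact (hcp (k + 1 + 1 - k - 2) (by omega)).2.2
          · rw [gri i (by omega), gri (i + 1) (by omega)]
            exact hinc (i - k - 2) (i + 1 - k - 2) (by omega) (by omega)
        · rw [g1]; exact hbE.1
        · intro f hf
          simp only [Interleaving, Finset.mem_image, Finset.mem_Icc] at hf
          obtain ⟨i, ⟨hi1, hi2⟩, rfl⟩ := hf
          dsimp only
          refine ⟨by omega, by omega, by omega, by omega, ?_⟩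
          by_cases hik : i = 1
          · rw [hik, g1, show (1 : ℕ) + k = k + 1 by omega, gmid]
            exact he
          · rw [gle i (by omega) hi2, gri (i + k) (by omega),
              show i + k - k - 2 = i - 2 by omega]
            exact hcE (i - 2) (by omega)
      refine build (fun i => if i ≤ 1 then e.1 else if i ≤ k then (c (i - 2)).1
        else if i ≤ k + 1 then e.2 else (c (i - k - 2)).2) ?_ ?_ ?_ ?_
      · rw [if_pos le_rfl]
      · intro i h2 hik; rw [if_neg (by omega), if_pos hik]
      · rw [if_neg (by omega), if_neg (by omega), if_pos le_rfl]
      · intro i hi; rw [if_neg (by omega), if_neg (by omega), if_neg (by omega)]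
    · -- left-broken nesting
      right; right
      have build : ∀ g : ℕ → ℕ,
          g 1 = e.1 → (∀ i, 2 ≤ i → i ≤ k → g i = (c (i - 2)).1) →
          g (k + 1) = e.2 → (∀ i, k + 2 ≤ i → g i = (c (2 * k - i)).2) →
          Contains E (LeftBrokenNesting k) := by
        intro g g1 gle gmid gri
        refine contains_of_g (2 * k) g ?_ ?_ ?_
        · intro i hi1 hi2
          by_cases h1 : i = 1
          · subst h1
            rw [g1]
            by_cases hk1 : k = 1
            · rw [show (1 : ℕ) + 1 = k + 1 by omega, gmid]
              exact hbE.2.1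
            · rw [gle (1 + 1) (by omega) (by omega)]
              exact (hcp (1 + 1 - 2) (by omega)).1
          by_cases h2 : i + 1 ≤ k
          · rw [gle i (by omega) (by omega), gle (i + 1) (by omega) h2]
            exact hc1 (i - 2) (i + 1 - 2) (by omega) (by omega)
          by_cases h3 : i = k
          · rw [h3, gle k (by omega) le_rfl, gmid]
            exact (hcp (k - 2) (by omega)).2.1
          by_cases h4 : i = k + 1
          · rw [h4, gmid, gri (k + 1 + 1) (by omega)]
            exact (hcp (2 * k - (k + 1 + 1)) (by omega)).2.2
          · rw [gri i (by omega), gri (i + 1) (by omega)]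
            exact hdec (2 * k - (i + 1)) (2 * k - i) (by omega) (by omega)
        · rw [g1]; exact hbE.1
        · intro f hf
          simp only [LeftBrokenNesting, Finset.mem_insert, Finset.mem_image,
            Finset.mem_Icc] at hf
          rcases hf with rfl | ⟨i, ⟨hi1, hi2⟩, rfl⟩
          · dsimp only
            refine ⟨by omega, by omega, by omega, by omega, ?_⟩
            rw [g1, gmid]
            exact he
          · dsimp only
            refine ⟨by omega, by omega, by omega, by omega, ?_⟩
            rw [gle (i + 1) (by omega) (by omega), gri (2 * k - i + 1) (by omega),
              show i + 1 - 2 = i - 1 by omega, show 2 * k - (2 * k - i + 1) = i - 1 by omega]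
            exact hcE (i - 1) (by omega)
      refine build (fun i => if i ≤ 1 then e.1 else if i ≤ k then (c (i - 2)).1
        else if i ≤ k + 1 then e.2 else (c (2 * k - i)).2) ?_ ?_ ?_ ?_
      · rw [if_pos le_rfl]
      · intro i h2 hik; rw [if_neg (by omega), if_pos hik]
      · rw [if_neg (by omega), if_neg (by omega), if_pos le_rfl]
      · intro i hi; rw [if_neg (by omega), if_neg (by omega), if_neg (by omega)]
  -- ===================== LEFT SIDE (edges f with f.1 < e.1 < f.2 < e.2) ================
  · have hTsub : S.filter (fun f => ¬ e.1 < f.1) ⊆ E := (Finset.filter_subset _ _).trans hS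
    have hTcard : (k - 1 - 1) * (k - 1 - 1) < (S.filter (fun f => ¬ e.1 < f.1)).card := by
      refine lt_of_le_of_lt (Nat.mul_le_mul (Nat.sub_le _ _) (Nat.sub_le _ _)) ?_
      have := hbigL
      rw [pow_two] at this
      omega
    obtain ⟨c, hcT, hc1, hc2⟩ := chain_extract hfst hsnd _ hTsub (k - 1) hTcard
    have hcE : ∀ j, j < k - 1 → c j ∈ E := fun j hj => hTsub (hcT j hj)
    have hcp : ∀ j, j < k - 1 → (c j).1 < e.1 ∧ e.1 < (c j).2 ∧ (c j).2 < e.2 :=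
      fun j hj => hSLp _ (hcT j hj)
    have pos1 : ∀ j, j < k - 1 → 1 ≤ (c j).1 := fun j hj => (hM.1 _ (hcE j hj)).1
    rcases hc2 with hinc | hdec
    · -- interleaving
      left
      have build : ∀ g : ℕ → ℕ,
          (∀ i, i ≤ k - 1 → g i = (c (i - 1)).1) → g k = e.1 →
          (∀ i, k + 1 ≤ i → i ≤ 2 * k - 1 → g i = (c (i - k - 1)).2) → g (2 * k) = e.2 →
          Contains E (Interleaving k) := by
        intro g gL gmid gR gend
        refine contains_of_g (2 * k) g ?_ ?_ ?_
        · intro i hi1 hi2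
          by_cases h1 : i + 1 ≤ k - 1
          · rw [gL i (by omega), gL (i + 1) h1]
            exact hc1 (i - 1) (i + 1 - 1) (by omega) (by omega)
          by_cases h2 : i = k - 1
          · rw [h2, gL (k - 1) le_rfl, show k - 1 + 1 = k by omega, gmid]
            exact (hcp (k - 1 - 1) (by omega)).1
          by_cases h3 : i = k
          · rw [h3, gmid]
            by_cases hk1 : k = 1
            · rw [show k + 1 = 2 * k by omega, gend]
              exact hbE.2.1
            · rw [gR (k + 1) (by omega) (by omega)]
              exact (hcp (k + 1 - k - 1) (by omega)).2.1
          by_cases h4 : i + 1 ≤ 2 * k - 1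
          · rw [gR i (by omega) (by omega), gR (i + 1) (by omega) h4]
            exact hinc (i - k - 1) (i + 1 - k - 1) (by omega) (by omega)
          · rw [gR i (by omega) (by omega), show i + 1 = 2 * k by omega, gend]
            exact (hcp (i - k - 1) (by omega)).2.2
        · by_cases hk2 : 2 ≤ k
          · rw [gL 1 (by omega)]
            exact pos1 (1 - 1) (by omega)
          · have h' : g 1 = e.1 := by
              rw [(by omega : (1 : ℕ) = k)]
              exact gmid
            rw [h']
            exact hbE.1
        · intro f hf
          simp only [Interleaving, Finset.mem_image, Finset.mem_Icc] at hf
          obtain ⟨i, ⟨hi1, hi2⟩, rfl⟩ := hf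
          dsimp only
          refine ⟨by omega, by omega, by omega, by omega, ?_⟩
          by_cases hik : i = k
          · rw [hik, gmid, show k + k = 2 * k by omega, gend]
            exact he
          · rw [gL i (by omega), gR (i + k) (by omega) (by omega),
              show i + k - k - 1 = i - 1 by omega]
            exact hcE (i - 1) (by omega)
      refine build (fun i => if i ≤ k - 1 then (c (i - 1)).1 else if i ≤ k then e.1
        else if i ≤ 2 * k - 1 then (c (i - k - 1)).2 else e.2) ?_ ?_ ?_ ?_
      · intro i hik; rw [if_pos hik]
      · rw [if_neg (by omega), if_pos le_rfl]
      · intro i hi1 hi2; rw [if_neg (by omega), if_neg (by omega), if_pos hi2]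
      · rw [if_neg (by omega), if_neg (by omega), if_neg (by omega)]
    · -- right-broken nesting
      right; left
      have build : ∀ g : ℕ → ℕ,
          (∀ i, i ≤ k - 1 → g i = (c (i - 1)).1) → g k = e.1 →
          (∀ i, k + 1 ≤ i → i ≤ 2 * k - 1 → g i = (c (2 * k - 1 - i)).2) →
          g (2 * k) = e.2 → Contains E (RightBrokenNesting k) := by
        intro g gL gmid gR gend
        refine contains_of_g (2 * k) g ?_ ?_ ?_
        · intro i hi1 hi2
          by_cases h1 : i + 1 ≤ k - 1
          · rw [gL i (by omega), gL (i + 1) h1]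
            exact hc1 (i - 1) (i + 1 - 1) (by omega) (by omega)
          by_cases h2 : i = k - 1
          · rw [h2, gL (k - 1) le_rfl, show k - 1 + 1 = k by omega, gmid]
            exact (hcp (k - 1 - 1) (by omega)).1
          by_cases h3 : i = k
          · rw [h3, gmid]
            by_cases hk1 : k = 1
            · rw [show k + 1 = 2 * k by omega, gend]
              exact hbE.2.1
            · rw [gR (k + 1) (by omega) (by omega)]
              exact (hcp (2 * k - 1 - (k + 1)) (by omega)).2.1
          by_cases h4 : i + 1 ≤ 2 * k - 1
          · rw [gR i (by omega) (by omega), gR (i + 1) (by omega) h4]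
            exact hdec (2 * k - 1 - (i + 1)) (2 * k - 1 - i) (by omega) (by omega)
          · rw [gR i (by omega) (by omega), show i + 1 = 2 * k by omega, gend]
            exact (hcp (2 * k - 1 - i) (by omega)).2.2
        · by_cases hk2 : 2 ≤ k
          · rw [gL 1 (by omega)]
            exact pos1 (1 - 1) (by omega)
          · have h' : g 1 = e.1 := by
              rw [(by omega : (1 : ℕ) = k)]
              exact gmid
            rw [h']
            exact hbE.1
        · intro f hf
          simp only [RightBrokenNesting, Finset.mem_insert, Finset.mem_image,
            Finset.mem_Icc] at hf
          rcases hf with rfl | ⟨i, ⟨hi1, hi2⟩, rfl⟩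
          · dsimp only
            refine ⟨by omega, by omega, by omega, by omega, ?_⟩
            rw [gmid, gend]
            exact he
          · dsimp only
            refine ⟨by omega, by omega, by omega, by omega, ?_⟩
            rw [gL i (by omega), gR (2 * k - i) (by omega) (by omega),
              show 2 * k - 1 - (2 * k - i) = i - 1 by omega]
            exact hcE (i - 1) (by omega)
      refine build (fun i => if i ≤ k - 1 then (c (i - 1)).1 else if i ≤ k then e.1
        else if i ≤ 2 * k - 1 then (c (2 * k - 1 - i)).2 else e.2) ?_ ?_ ?_ ?_
      · intro i hik; rw [if_pos hik]
      · rw [if_neg (by omega), if_pos le_rfl]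
      · intro i hi1 hi2; rw [if_neg (by omega), if_neg (by omega), if_pos hi2]
      · rw [if_neg (by omega), if_neg (by omega), if_neg (by omega)]
end

section
/- Every indecomposable matching with at least 2 edges has, for every edge p_1, a proper right-reaching pin sequence beginning with p_1: a sequence of edges p_1, ..., p_m such that p_m is incident to the vertex 2n, each p_i (i ≥ 2) splits the shadow of {p_1,...,p_{i-1}}, and for each i ≥ 3, p_i crosses p_{i-1} but does not split the shadow of {p_1,...,p_{i-2}}. -/
-- auxiliary

def GoodSeq (E : Finset (ℕ × ℕ)) (p : ℕ × ℕ) (L : List (ℕ × ℕ)) : Prop :=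
  L ≠ [] ∧ (∀ e ∈ L, e ∈ E) ∧ L.head? = some p ∧ IsProperPinSeq L

lemma mem_of_headq {α} {l : List α} {a : α} (h : l.head? = some a) : a ∈ l := by
  cases l with
  | nil => simp at h
  | cons x t => simp only [List.head?_cons, Option.some.injEq] at h; simp [h]

lemma exists_lo_hi (M : List (ℕ × ℕ)) (h : M ≠ []) :
    ∃ lo hi : ℕ, (∃ a ∈ M, a.1 = lo) ∧ (∃ b ∈ M, b.2 = hi) ∧
      (∀ a ∈ M, lo ≤ a.1) ∧ (∀ b ∈ M, b.2 ≤ hi) := by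
  induction M with
  | nil => simp at h
  | cons e M ih =>
    rcases eq_or_ne M [] with rfl | hM
    · exact ⟨e.1, e.2, ⟨e, by simp⟩, ⟨e, by simp⟩, by simp, by simp⟩
    · obtain ⟨lo, hi, ⟨a, ha, rfl⟩, ⟨b, hb, rfl⟩, hlo, hhi⟩ := ih hM
      refine ⟨min e.1 a.1, max e.2 b.2, ?_, ?_, ?_, ?_⟩
      · rcases le_total e.1 a.1 with h' | h'
        · exact ⟨e, by simp, by omega⟩
        · exact ⟨a, by simp [ha], by omega⟩
      · rcases le_total e.2 b.2 with h' | h'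
        · exact ⟨b, by simp [hb], by omega⟩
        · exact ⟨e, by simp, by omega⟩
      · intro x hx
        rcases List.mem_cons.1 hx with rfl | hx
        · omega
        · have := hlo x hx; omega
      · intro x hx
        rcases List.mem_cons.1 hx with rfl | hx
        · omega
        · have := hhi x hx; omega

lemma shadow_char (M : List (ℕ × ℕ)) (lo hi : ℕ)
    (h1 : ∃ a ∈ M, a.1 = lo) (h2 : ∃ b ∈ M, b.2 = hi)
    (h3 : ∀ a ∈ M, lo ≤ a.1) (h4 : ∀ b ∈ M, b.2 ≤ hi) (v : ℕ) :
    InShadow M v ↔ lo ≤ v ∧ v ≤ hi := by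
  constructor
  · rintro ⟨⟨a, ha, hav⟩, ⟨b, hb, hvb⟩⟩
    exact ⟨le_trans (h3 a ha) hav, le_trans hvb (h4 b hb)⟩
  · rintro ⟨hl, hr⟩
    obtain ⟨a, ha, rfl⟩ := h1
    obtain ⟨b, hb, rfl⟩ := h2
    exact ⟨⟨a, ha, hl⟩, ⟨b, hb, hr⟩⟩

lemma shadow_append (M : List (ℕ × ℕ)) (g : ℕ × ℕ) (v : ℕ) (lo hi : ℕ)
    (h1 : ∃ a ∈ M, a.1 = lo) (h2 : ∃ b ∈ M, b.2 = hi)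
    (h3 : ∀ a ∈ M, lo ≤ a.1) (h4 : ∀ b ∈ M, b.2 ≤ hi) :
    InShadow (M ++ [g]) v ↔ (lo ≤ v ∨ g.1 ≤ v) ∧ (v ≤ hi ∨ v ≤ g.2) := by
  constructor
  · rintro ⟨⟨a, ha, hav⟩, ⟨b, hb, hvb⟩⟩
    simp only [List.mem_append, List.mem_singleton] at ha hb
    constructor
    · rcases ha with ha | rfl
      · exact Or.inl (le_trans (h3 a ha) hav)
      · exact Or.inr hav
    · rcases hb with hb | rfl
      · exact Or.inl (le_trans hvb (h4 b hb))
      · exact Or.inr hvb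
  · rintro ⟨hl, hr⟩
    obtain ⟨a, ha, rfl⟩ := h1
    obtain ⟨b, hb, rfl⟩ := h2
    constructor
    · rcases hl with hl | hl
      · exact ⟨a, by simp [ha], hl⟩
      · exact ⟨g, by simp, hl⟩
    · rcases hr with hr | hr
      · exact ⟨b, by simp [hb], hr⟩
      · exact ⟨g, by simp, hr⟩

lemma edge_eq_of_shared {n : ℕ} {E : Finset (ℕ × ℕ)} (hM : IsMatching n E)
    {e f : ℕ × ℕ} (he : e ∈ E) (hf : f ∈ E) (v : ℕ)
    (hv1 : v = e.1 ∨ v = e.2) (hv2 : v = f.1 ∨ v = f.2) : e = f := by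
  obtain ⟨hb, hu⟩ := hM
  have he' := hb e he
  have hvI : v ∈ Finset.Icc 1 (2 * n) := by
    rcases hv1 with rfl | rfl <;> simp only [Finset.mem_Icc] <;> omega
  obtain ⟨g, _, hgu⟩ := hu v hvI
  rw [hgu e ⟨he, hv1⟩, hgu f ⟨hf, hv2⟩]

lemma crosses_of_proper {n : ℕ} {E : Finset (ℕ × ℕ)} (hM : IsMatching n E)
    (M : List (ℕ × ℕ)) (hMne : M ≠ []) (hME : ∀ e ∈ M, e ∈ E)
    {g f : ℕ × ℕ} (hg : g ∈ E) (hf : f ∈ E)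
    (hsg : SplitsL g M) (hsf : SplitsL f (M ++ [g])) (hnsf : ¬ SplitsL f M) :
    Crosses g f := by
  obtain ⟨lo, hi, h1, h2, h3, h4⟩ := exists_lo_hi M hMne
  have hlh : lo ≤ hi := by
    obtain ⟨a, ha, rfl⟩ := h1
    have h5 := (hM.1 a (hME a ha)).2.1
    have h6 := h4 a ha
    omega
  have hgg := hM.1 g hg
  have hff := hM.1 f hf
  have hne : f ≠ g := fun hEq => hnsf (hEq ▸ hsg)
  have d1 : g.1 ≠ f.1 := fun hEq =>
    hne (edge_eq_of_shared hM hf hg f.1 (Or.inl rfl) (Or.inl hEq.symm))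
  have d2 : g.1 ≠ f.2 := fun hEq =>
    hne (edge_eq_of_shared hM hf hg f.2 (Or.inr rfl) (Or.inl hEq.symm))
  have d3 : g.2 ≠ f.1 := fun hEq =>
    hne (edge_eq_of_shared hM hf hg f.1 (Or.inl rfl) (Or.inr hEq.symm))
  have d4 : g.2 ≠ f.2 := fun hEq =>
    hne (edge_eq_of_shared hM hf hg f.2 (Or.inr rfl) (Or.inr hEq.symm))
  have c1 := shadow_char M lo hi h1 h2 h3 h4 g.1
  have c2 := shadow_char M lo hi h1 h2 h3 h4 g.2
  have c3 := shadow_char M lo hi h1 h2 h3 h4 f.1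
  have c4 := shadow_char M lo hi h1 h2 h3 h4 f.2
  have c5 := shadow_append M g f.1 lo hi h1 h2 h3 h4
  have c6 := shadow_append M g f.2 lo hi h1 h2 h3 h4
  unfold SplitsL at hsg hsf hnsf
  rw [c1, c2] at hsg
  rw [c5, c6] at hsf
  rw [c3, c4] at hnsf
  unfold Crosses
  unfold Xor' Xor at hsg hsf hnsf
  omega

lemma goodSeq_take {E : Finset (ℕ × ℕ)} {p : ℕ × ℕ} {L : List (ℕ × ℕ)}
    (h : GoodSeq E p L) (k : ℕ) (hk : 1 ≤ k) : GoodSeq E p (L.take k) := by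
  obtain ⟨hne, hE, hhd, hpin, hprop⟩ := h
  have hlen : 0 < L.length := List.length_pos_iff.mpr hne
  refine ⟨?_, ?_, ?_, ?_, ?_⟩
  · apply List.ne_nil_of_length_pos
    rw [List.length_take]; omega
  · exact fun e he => hE e (List.take_subset k L he)
  · cases L with
    | nil => simp at hne
    | cons a t =>
      cases k with
      | zero => omega
      | succ k' => simpa using hhd
  · intro i hi hpos
    have hi0 : i < min k L.length := by simpa [List.length_take] using hi
    have hi' : i < L.length := by omega
    have hget : (L.take k).get ⟨i, hi⟩ = L.get ⟨i, hi'⟩ := by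
      simp [List.getElem_take]
    have htk : (L.take k).take i = L.take i := by
      rw [List.take_take, min_eq_left (by omega)]
    rw [hget, htk]
    exact hpin i hi' hpos
  · intro i hi h2
    have hi0 : i < min k L.length := by simpa [List.length_take] using hi
    have hi' : i < L.length := by omega
    have hget : (L.take k).get ⟨i, hi⟩ = L.get ⟨i, hi'⟩ := by
      simp [List.getElem_take]
    have htk : (L.take k).take (i - 1) = L.take (i - 1) := by
      rw [List.take_take, min_eq_left (by omega)]
    rw [hget, htk]
    exact hprop i hi' h2

lemma goodSeq_append {E : Finset (ℕ × ℕ)} {p : ℕ × ℕ} {L : List (ℕ × ℕ)}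
    (h : GoodSeq E p L) {e : ℕ × ℕ} (he : e ∈ E)
    (hs : SplitsL e L) (hns : 2 ≤ L.length → ¬ SplitsL e (L.take (L.length - 1))) :
    GoodSeq E p (L ++ [e]) := by
  obtain ⟨hne, hE, hhd, hpin, hprop⟩ := h
  have hlen : 0 < L.length := List.length_pos_iff.mpr hne
  refine ⟨by simp, ?_, ?_, ?_, ?_⟩
  · intro x hx
    rcases List.mem_append.1 hx with hx | hx
    · exact hE x hx
    · rw [List.mem_singleton] at hx; exact hx ▸ he
  · cases L with
    | nil => simp at hne
    | cons a t => simpa using hhd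
  · intro i hi hpos
    have hi2 : i < L.length + 1 := by simpa using hi
    rcases lt_or_ge i L.length with hil | hil
    · have hget : (L ++ [e]).get ⟨i, hi⟩ = L.get ⟨i, hil⟩ := by
        simp [List.getElem_append_left hil]
      have htk : (L ++ [e]).take i = L.take i :=
        List.take_append_of_le_length (by omega)
      rw [hget, htk]
      exact hpin i hil hpos
    · have hieq : i = L.length := by omega
      subst hieq
      have hget : (L ++ [e]).get ⟨L.length, hi⟩ = e := by simp
      have htk : (L ++ [e]).take L.length = L := List.take_left
      rw [hget, htk]
      exact hs
  · intro i hi h2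
    have hi2 : i < L.length + 1 := by simpa using hi
    rcases lt_or_ge i L.length with hil | hil
    · have hget : (L ++ [e]).get ⟨i, hi⟩ = L.get ⟨i, hil⟩ := by
        simp [List.getElem_append_left hil]
      have htk : (L ++ [e]).take (i - 1) = L.take (i - 1) :=
        List.take_append_of_le_length (by omega)
      rw [hget, htk]
      exact hprop i hil h2
    · have hieq : i = L.length := by omega
      subst hieq
      have hget : (L ++ [e]).get ⟨L.length, hi⟩ = e := by simp
      have htk : (L ++ [e]).take (L.length - 1) = L.take (L.length - 1) :=
        List.take_append_of_le_length (by omega)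
      rw [hget, htk]
      exact hns (by omega)

lemma reach_of_reach {n : ℕ} {E : Finset (ℕ × ℕ)} (hM : IsMatching n E) {p : ℕ × ℕ}
    {e : ℕ × ℕ} (he : e ∈ E) (L0 : List (ℕ × ℕ)) (hL0 : GoodSeq E p L0)
    (x y : ℕ) (hxy : (x = e.1 ∧ y = e.2) ∨ (x = e.2 ∧ y = e.1))
    (hx : InShadow L0 x) :
    ∃ L, GoodSeq E p L ∧ InShadow L y := by
  classical
  have he12 : e.1 ≤ e.2 := le_of_lt (hM.1 e he).2.1
  have hlen0 : 0 < L0.length := List.length_pos_iff.mpr hL0.1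
  have hex : ∃ k, 1 ≤ k ∧ InShadow (L0.take k) x :=
    ⟨L0.length, by omega, by rwa [List.take_length]⟩
  obtain ⟨hk1, hkx⟩ := Nat.find_spec hex
  have hL'good : GoodSeq E p (L0.take (Nat.find hex)) := goodSeq_take hL0 _ hk1
  by_cases hyL' : InShadow (L0.take (Nat.find hex)) y
  · exact ⟨L0.take (Nat.find hex), hL'good, hyL'⟩
  have hsplit : SplitsL e (L0.take (Nat.find hex)) := by
    unfold SplitsL
    rcases hxy with ⟨hx1, hy1⟩ | ⟨hx1, hy1⟩
    · exact Or.inl ⟨hx1 ▸ hkx, hy1 ▸ hyL'⟩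
    · exact Or.inr ⟨hx1 ▸ hkx, hy1 ▸ hyL'⟩
  have hlenT : (L0.take (Nat.find hex)).length = min (Nat.find hex) L0.length :=
    List.length_take
  have hns : 2 ≤ (L0.take (Nat.find hex)).length →
      ¬ SplitsL e ((L0.take (Nat.find hex)).take ((L0.take (Nat.find hex)).length - 1)) := by
    intro h2
    have hmk : (L0.take (Nat.find hex)).length - 1 < Nat.find hex := by omega
    have heq : (L0.take (Nat.find hex)).take ((L0.take (Nat.find hex)).length - 1)
        = L0.take ((L0.take (Nat.find hex)).length - 1) := by
      rw [List.take_take, min_eq_left (by omega)]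
    have hmin := Nat.find_min hex hmk
    have hnx : ¬ InShadow (L0.take ((L0.take (Nat.find hex)).length - 1)) x :=
      fun hc => hmin ⟨by omega, hc⟩
    have hsub : L0.take ((L0.take (Nat.find hex)).length - 1) ⊆ L0.take (Nat.find hex) := by
      intro z hz
      have hzz : z ∈ (L0.take (Nat.find hex)).take ((L0.take (Nat.find hex)).length - 1) := by
        rwa [heq]
      exact List.take_subset _ _ hzz
    have hny : ¬ InShadow (L0.take ((L0.take (Nat.find hex)).length - 1)) y := by
      rintro ⟨⟨a, ha, hav⟩, ⟨b, hb, hvb⟩⟩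
      exact hyL' ⟨⟨a, hsub ha, hav⟩, ⟨b, hsub hb, hvb⟩⟩
    rw [heq]
    unfold SplitsL
    rcases hxy with ⟨hx1, hy1⟩ | ⟨hx1, hy1⟩ <;>
      rintro (⟨ha, hb⟩ | ⟨ha, hb⟩) <;> subst hx1 <;> subst hy1 <;> tauto
  refine ⟨L0.take (Nat.find hex) ++ [e], goodSeq_append hL'good he hsplit hns, ?_, ?_⟩
  · refine ⟨e, by simp, ?_⟩
    rcases hxy with ⟨_, hy1⟩ | ⟨_, hy1⟩ <;> omega
  · refine ⟨e, by simp, ?_⟩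
    rcases hxy with ⟨_, hy1⟩ | ⟨_, hy1⟩ <;> omega

theorem stmt5 (n : ℕ) (hn : 2 ≤ n) (E : Finset (ℕ × ℕ)) (hM : IsMatching n E)
    (hind : Indecomposable n E) (p : ℕ × ℕ) (hp : p ∈ E) :
    ∃ L : List (ℕ × ℕ), L ≠ [] ∧ (∀ e ∈ L, e ∈ E) ∧ L.head? = some p ∧
      (∃ q, L.getLast? = some q ∧ (q.1 = 2 * n ∨ q.2 = 2 * n)) ∧
      IsPinSeq L ∧
      (∀ i (h : i < L.length) (h' : i - 1 < L.length), 2 ≤ i →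
        Crosses (L.get ⟨i - 1, h'⟩) (L.get ⟨i, h⟩) ∧
        ¬ SplitsL (L.get ⟨i, h⟩) (L.take (i - 1))) := by
  classical
  have hbounds := hM.1
  have hp' := hbounds p hp
  have hgood0 : GoodSeq E p [p] := by
    refine ⟨by simp, by simpa using hp, rfl, ?_, ?_⟩
    · intro i h hi
      simp only [List.length_singleton] at h
      exact absurd h (by omega)
    · intro i h hi
      simp only [List.length_singleton] at h
      exact absurd h (by omega)
  have hreach_bound : ∀ v, (∃ L, GoodSeq E p L ∧ InShadow L v) → 1 ≤ v ∧ v ≤ 2 * n := by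
    rintro v ⟨L, hL, ⟨a, ha, hav⟩, ⟨b, hb, hvb⟩⟩
    have h1 := hbounds a (hL.2.1 a ha)
    have h2 := hbounds b (hL.2.1 b hb)
    omega
  set P : ℕ → Prop := fun v => ∃ L, GoodSeq E p L ∧ InShadow L v with hPdef
  have hP1 : P p.1 := ⟨[p], hgood0, ⟨p, by simp⟩, ⟨p, by simp; omega⟩⟩
  have hP2 : P p.2 := ⟨[p], hgood0, ⟨p, by simp; omega⟩, ⟨p, by simp⟩⟩
  have hex : ∃ v, P v := ⟨p.1, hP1⟩
  have hPl : P (Nat.find hex) := Nat.find_spec hex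
  have hlmin : ∀ v, P v → Nat.find hex ≤ v := fun v hv => Nat.find_min' hex hv
  have hPr : P (Nat.findGreatest P (2 * n)) :=
    Nat.findGreatest_spec (hreach_bound p.2 hP2).2 hP2
  have hrmax : ∀ v, P v → v ≤ Nat.findGreatest P (2 * n) :=
    fun v hv => Nat.le_findGreatest (hreach_bound v hv).2 hv
  have h1l : 1 ≤ Nat.find hex := (hreach_bound _ hPl).1
  have hr2n : Nat.findGreatest P (2 * n) ≤ 2 * n := Nat.findGreatest_le _
  have hlr : Nat.find hex ≤ Nat.findGreatest P (2 * n) :=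
    le_trans (hlmin p.1 hP1) (hrmax p.1 hP1)
  have hsingle : ∀ x, Nat.find hex ≤ x → x ≤ Nat.findGreatest P (2 * n) →
      ∃ L, GoodSeq E p L ∧ InShadow L x := by
    intro x hx1 hx2
    rcases lt_or_ge x p.1 with h | h
    · obtain ⟨L1, hL1, hsh⟩ := hPl
      obtain ⟨a, ha, hav⟩ := hsh.1
      exact ⟨L1, hL1, ⟨a, ha, le_trans hav hx1⟩,
        ⟨p, mem_of_headq hL1.2.2.1, by omega⟩⟩
    rcases le_or_gt x p.2 with h2 | h2
    · exact ⟨[p], hgood0, ⟨p, by simp, h⟩, ⟨p, by simp, h2⟩⟩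
    · obtain ⟨L2, hL2, hsh⟩ := hPr
      obtain ⟨b, hb, hvb⟩ := hsh.2
      exact ⟨L2, hL2, ⟨p, mem_of_headq hL2.2.2.1, by omega⟩,
        ⟨b, hb, le_trans hx2 hvb⟩⟩
  have hint : IsInterval E (Nat.find hex) (Nat.findGreatest P (2 * n)) := by
    intro e he
    constructor
    · rintro ⟨h1, h2⟩
      obtain ⟨L0, hL0, hx⟩ := hsingle e.1 h1 h2
      have hy : P e.2 := reach_of_reach hM he L0 hL0 e.1 e.2 (Or.inl ⟨rfl, rfl⟩) hx
      exact ⟨hlmin _ hy, hrmax _ hy⟩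
    · rintro ⟨h1, h2⟩
      obtain ⟨L0, hL0, hx⟩ := hsingle e.2 h1 h2
      have hy : P e.1 := reach_of_reach hM he L0 hL0 e.2 e.1 (Or.inr ⟨rfl, rfl⟩) hx
      exact ⟨hlmin _ hy, hrmax _ hy⟩
  obtain ⟨hl1, hr⟩ := hind _ _ h1l hlr hr2n hint
  obtain ⟨L, hL, hsh⟩ := hPr
  obtain ⟨b, hbL, hb2⟩ := hsh.2
  have hb2n : b.2 = 2 * n := by
    have := (hbounds b (hL.2.1 b hbL)).2.2
    omega
  have hlenL : 0 < L.length := List.length_pos_iff.mpr hL.1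
  have hex2 : ∃ k, 1 ≤ k ∧ ∃ b' ∈ L.take k, b'.2 = 2 * n :=
    ⟨L.length, by omega, ⟨b, by rwa [List.take_length], hb2n⟩⟩
  obtain ⟨hk1, b', hb'mem, hb'⟩ := Nat.find_spec hex2
  have hkle : Nat.find hex2 ≤ L.length := by
    by_contra hcon
    push_neg at hcon
    exact Nat.find_min hex2 hcon ⟨by omega, ⟨b, by rwa [List.take_length], hb2n⟩⟩
  have hk1' : Nat.find hex2 - 1 < L.length := by omega
  have htakek : L.take (Nat.find hex2) =
      L.take (Nat.find hex2 - 1) ++ [L.get ⟨Nat.find hex2 - 1, hk1'⟩] := by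
    conv_lhs => rw [show Nat.find hex2 = (Nat.find hex2 - 1) + 1 by omega]
    rw [List.take_succ, List.getElem?_eq_getElem hk1']
    rfl
  have hlast2n : (L.get ⟨Nat.find hex2 - 1, hk1'⟩).2 = 2 * n := by
    rcases List.mem_append.1 (htakek ▸ hb'mem) with hmem | hmem
    · exfalso
      rcases Nat.eq_or_lt_of_le hk1 with heq | hlt
      · rw [← heq] at hmem; simp at hmem
      · exact Nat.find_min hex2 (show Nat.find hex2 - 1 < Nat.find hex2 by omega)
          ⟨by omega, ⟨b', hmem, hb'⟩⟩
    · rw [List.mem_singleton] at hmem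
      rw [← hmem]; exact hb'
  have hMgood := goodSeq_take hL (Nat.find hex2) hk1
  have hMlast : (L.take (Nat.find hex2)).getLast? = some (L.get ⟨Nat.find hex2 - 1, hk1'⟩) := by
    rw [htakek, List.getLast?_concat]
  refine ⟨L.take (Nat.find hex2), hMgood.1, hMgood.2.1, hMgood.2.2.1,
    ⟨_, hMlast, Or.inr hlast2n⟩, hMgood.2.2.2.1, ?_⟩
  intro i h h' h2
  have hprop := hMgood.2.2.2.2 i h h2
  refine ⟨?_, hprop⟩
  have hgsplit : SplitsL ((L.take (Nat.find hex2)).get ⟨i - 1, h'⟩)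
      ((L.take (Nat.find hex2)).take (i - 1)) :=
    hMgood.2.2.2.1 (i - 1) h' (by omega)
  have hfsplit : SplitsL ((L.take (Nat.find hex2)).get ⟨i, h⟩)
      ((L.take (Nat.find hex2)).take i) :=
    hMgood.2.2.2.1 i h (by omega)
  have htake : (L.take (Nat.find hex2)).take i =
      (L.take (Nat.find hex2)).take (i - 1) ++ [(L.take (Nat.find hex2)).get ⟨i - 1, h'⟩] := by
    conv_lhs => rw [show i = (i - 1) + 1 by omega]
    rw [List.take_succ, List.getElem?_eq_getElem h']
    rfl
  rw [htake] at hfsplit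
  have hne : (L.take (Nat.find hex2)).take (i - 1) ≠ [] := by
    apply List.ne_nil_of_length_pos
    rw [List.length_take]
    have : i < (L.take (Nat.find hex2)).length := h
    omega
  exact crosses_of_proper hM _ hne
    (fun e he => hMgood.2.1 e (List.take_subset _ _ he))
    (hMgood.2.1 _ (List.get_mem _ _))
    (hMgood.2.1 _ (List.get_mem _ _))
    hgsplit hfsplit hprop
end

section
/- Every indecomposable matching with at least (2k^2)^(2k) + 1 edges contains a broken nesting with k edges, an interleaving with k edges, or a proper pin sequence with k edges. -/
open scoped Classical

lemma crosses_symm {e f : ℕ × ℕ} : Crosses e f ↔ Crosses f e := by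
  unfold Crosses; tauto

lemma matching_distinct {n : ℕ} {E : Finset (ℕ × ℕ)} (hM : IsMatching n E)
    {e f : ℕ × ℕ} (he : e ∈ E) (hf : f ∈ E) (hne : e ≠ f) :
    e.1 ≠ f.1 ∧ e.1 ≠ f.2 ∧ e.2 ≠ f.1 ∧ e.2 ≠ f.2 := by
  obtain ⟨h1e, h2e, h3e⟩ := hM.1 e he
  obtain ⟨h1f, h2f, h3f⟩ := hM.1 f hf
  have key : ∀ v, v ∈ Finset.Icc 1 (2*n) → (v = e.1 ∨ v = e.2) → (v = f.1 ∨ v = f.2) → False := by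
    intro v hv hve hvf
    obtain ⟨w, _, huniq⟩ := hM.2 v hv
    exact hne ((huniq e ⟨he, hve⟩).trans (huniq f ⟨hf, hvf⟩).symm)
  refine ⟨?_, ?_, ?_, ?_⟩ <;> intro h
  · exact key e.1 (Finset.mem_Icc.2 ⟨h1e, by omega⟩) (Or.inl rfl) (Or.inl h)
  · exact key e.1 (Finset.mem_Icc.2 ⟨h1e, by omega⟩) (Or.inl rfl) (Or.inr h)
  · exact key e.2 (Finset.mem_Icc.2 ⟨by omega, h3e⟩) (Or.inr rfl) (Or.inl h)
  · exact key e.2 (Finset.mem_Icc.2 ⟨by omega, h3e⟩) (Or.inr rfl) (Or.inr h)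

lemma n_le_card {n : ℕ} {E : Finset (ℕ × ℕ)} (hM : IsMatching n E) : n ≤ E.card := by
  have hsub : Finset.Icc 1 (2*n) ⊆ E.biUnion (fun e => {e.1, e.2}) := by
    intro v hv
    obtain ⟨w, ⟨hw, hv'⟩, _⟩ := hM.2 v hv
    refine Finset.mem_biUnion.2 ⟨w, hw, ?_⟩
    simp only [Finset.mem_insert, Finset.mem_singleton]
    tauto
  have h1 := Finset.card_le_card hsub
  have h2 := Finset.card_biUnion_le (s := E) (t := fun e => ({e.1, e.2} : Finset ℕ))
  have h4 : ∑ e ∈ E, ({e.1, e.2} : Finset ℕ).card ≤ 2 * E.card := by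
    calc ∑ e ∈ E, ({e.1, e.2} : Finset ℕ).card ≤ ∑ _e ∈ E, 2 :=
          Finset.sum_le_sum (fun e _ => (Finset.card_insert_le _ _).trans (by simp))
    _ = 2 * E.card := by rw [Finset.sum_const, smul_eq_mul, mul_comm]
  have h5 : (Finset.Icc 1 (2*n)).card = 2*n := by rw [Nat.card_Icc]; omega
  omega

section Chains

variable (S : Finset (ℕ × ℕ)) (R : ℕ → ℕ → Prop)

def ChainP (u : ℕ × ℕ) (m : ℕ) : Prop :=
  ∃ c : ℕ → ℕ × ℕ, c m = u ∧ (∀ i ≤ m, c i ∈ S) ∧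
    (∀ i j, i < j → j ≤ m → (c i).1 < (c j).1 ∧ R (c i).2 (c j).2)

noncomputable def chainLen (u : ℕ × ℕ) : ℕ := Nat.findGreatest (ChainP S R u) S.card

lemma chainP_card {u m} (h : ChainP S R u m) : m + 1 ≤ S.card := by
  obtain ⟨c, -, hmem, hmono⟩ := h
  have : (Finset.range (m+1)).card ≤ S.card := by
    apply Finset.card_le_card_of_injOn c
    · intro i hi; exact hmem i (Nat.lt_succ_iff.1 (Finset.mem_range.1 hi))
    · intro i hi j hj hij
      simp only [Finset.coe_range, Set.mem_Iio] at hi hj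
      by_contra hne
      rcases Nat.lt_or_ge i j with h' | h'
      · have := (hmono i j h' (by omega)).1; rw [hij] at this; omega
      · have := (hmono j i (by omega) (by omega)).1; rw [hij] at this; omega
  simpa using this

lemma chainP_zero {u} (hu : u ∈ S) : ChainP S R u 0 :=
  ⟨fun _ => u, rfl, fun i hi => by simpa [Nat.le_zero.1 hi] using hu,
   fun i j hij hj => absurd hj (by omega)⟩

lemma chainLen_spec {u} (hu : u ∈ S) : ChainP S R u (chainLen S R u) :=
  Nat.findGreatest_spec (Nat.zero_le _) (chainP_zero S R hu)

lemma chainLen_lt {u v} (htrans : ∀ a b c, R a b → R b c → R a c)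
    (hu : u ∈ S) (hv : v ∈ S) (h1 : u.1 < v.1) (h2 : R u.2 v.2) :
    chainLen S R u < chainLen S R v := by
  obtain ⟨c, hcu, hmem, hmono⟩ := chainLen_spec S R hu
  set m := chainLen S R u with hm
  have hch : ChainP S R v (m+1) := by
    refine ⟨fun i => if i ≤ m then c i else v, by simp, ?_, ?_⟩
    · intro i hi
      by_cases h : i ≤ m
      · simpa [h] using hmem i h
      · simpa [h] using hv
    · intro i j hij hj
      by_cases hjm : j ≤ m
      · have hi : i ≤ m := by omega
        simpa [hi, hjm] using hmono i j hij hjm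
      · have hi : i ≤ m := by omega
        have hgoal : (c i).1 < v.1 ∧ R (c i).2 v.2 := by
          rcases Nat.lt_or_ge i m with h' | h'
          · obtain ⟨ha, hb⟩ := hmono i m h' le_rfl
            rw [hcu] at ha hb
            exact ⟨by omega, htrans _ _ _ hb h2⟩
          · have hieq : i = m := by omega
            rw [hieq, hcu]; exact ⟨h1, h2⟩
        simpa [hi, hjm] using hgoal
  have hle : m + 1 ≤ S.card := by have := chainP_card S R hch; omega
  exact Nat.lt_of_lt_of_le (Nat.lt_succ_self m) (Nat.le_findGreatest hle hch)

end Chains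

lemma erdos_szekeres_pairs (r s : ℕ) (S : Finset (ℕ × ℕ))
    (hdist : ∀ u ∈ S, ∀ v ∈ S, u ≠ v → u.1 ≠ v.1 ∧ u.2 ≠ v.2)
    (hcard : r * s + 1 ≤ S.card) :
    (∃ c : ℕ → ℕ × ℕ, (∀ i ≤ r, c i ∈ S) ∧
      ∀ i j, i < j → j ≤ r → (c i).1 < (c j).1 ∧ (c i).2 < (c j).2) ∨
    (∃ c : ℕ → ℕ × ℕ, (∀ i ≤ s, c i ∈ S) ∧
      ∀ i j, i < j → j ≤ s → (c i).1 < (c j).1 ∧ (c j).2 < (c i).2) := by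
  by_cases hA : ∃ u ∈ S, r ≤ chainLen S (· < ·) u
  · obtain ⟨u, hu, hr⟩ := hA
    obtain ⟨c, -, hmem, hmono⟩ := chainLen_spec S (· < ·) hu
    exact Or.inl ⟨c, fun i hi => hmem i (hi.trans hr),
      fun i j hij hj => hmono i j hij (hj.trans hr)⟩
  by_cases hB : ∃ u ∈ S, s ≤ chainLen S (fun a b => b < a) u
  · obtain ⟨u, hu, hs⟩ := hB
    obtain ⟨c, -, hmem, hmono⟩ := chainLen_spec S (fun a b => b < a) hu
    exact Or.inr ⟨c, fun i hi => hmem i (hi.trans hs),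
      fun i j hij hj => hmono i j hij (hj.trans hs)⟩
  exfalso
  push_neg at hA hB
  have hmaps : ∀ u ∈ S, (chainLen S (· < ·) u, chainLen S (fun a b => b < a) u)
      ∈ Finset.range r ×ˢ Finset.range s := by
    intro u hu
    simp only [Finset.mem_product, Finset.mem_range]
    exact ⟨hA u hu, hB u hu⟩
  have hinj : Set.InjOn (fun u => (chainLen S (· < ·) u, chainLen S (fun a b => b < a) u)) S := by
    intro u hu v hv heq
    by_contra hne
    simp only [Finset.mem_coe] at hu hv
    obtain ⟨hne1, hne2⟩ := hdist u hu v hv hne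
    have heq1 : chainLen S (· < ·) u = chainLen S (· < ·) v := congrArg Prod.fst heq
    have heq2 : chainLen S (fun a b => b < a) u = chainLen S (fun a b => b < a) v :=
      congrArg Prod.snd heq
    rcases Nat.lt_or_ge u.1 v.1 with h1 | h1
    · rcases Nat.lt_or_ge u.2 v.2 with h2 | h2
      · have := chainLen_lt S (· < ·) (fun a b c => Nat.lt_trans) hu hv h1 h2; omega
      · have := chainLen_lt S (fun a b => b < a) (fun a b c hab hbc => Nat.lt_trans hbc hab)
          hu hv h1 (by omega); omega
    · have h1' : v.1 < u.1 := by omega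
      rcases Nat.lt_or_ge v.2 u.2 with h2 | h2
      · have := chainLen_lt S (· < ·) (fun a b c => Nat.lt_trans) hv hu h1' h2; omega
      · have := chainLen_lt S (fun a b => b < a) (fun a b c hab hbc => Nat.lt_trans hbc hab)
          hv hu h1' (by omega); omega
  have := Finset.card_le_card_of_injOn _ hmaps hinj
  rw [Finset.card_product] at this
  simp only [Finset.card_range] at this
  omega


lemma ext_mono (m : ℕ) (w : ℕ → ℕ) (hm : 1 ≤ m) (h1 : 1 ≤ w 1)
    (hstep : ∀ i, 1 ≤ i → i + 1 ≤ m → w i < w (i+1)) :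
    ∃ φ : ℕ → ℕ, StrictMono φ ∧ ∀ i, 1 ≤ i → i ≤ m → φ i = w i := by
  refine ⟨fun t => if t = 0 then w 1 - 1 else if t ≤ m then w t else w m + (t - m), ?_, ?_⟩
  · apply strictMono_nat_of_lt_succ
    intro t
    beta_reduce
    rcases Nat.eq_zero_or_pos t with ht0 | htpos
    · subst ht0; norm_num; split_ifs <;> first | exact (by assumption : False).elim | omega
    · rcases Nat.lt_or_ge t m with h | h
      · have := hstep t htpos (by omega)
        split_ifs <;> first | exact (by assumption : False).elim | omega
      · rcases Nat.eq_or_lt_of_le h with heq | hlt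
        · subst heq
          split_ifs <;> first | exact (by assumption : False).elim | omega
        · split_ifs <;> first | exact (by assumption : False).elim | omega
  · intro i hi1 him
    beta_reduce
    rw [if_neg (by omega : ¬ i = 0), if_pos him]

lemma contains_interleaving {E : Finset (ℕ × ℕ)} (k : ℕ) (hk : 1 ≤ k) (c : ℕ → ℕ × ℕ)
    (hmem : ∀ i, i < k → c i ∈ E)
    (hE1 : ∀ e ∈ E, 1 ≤ e.1)
    (hmono : ∀ i j, i < j → j < k → (c i).1 < (c j).1 ∧ (c i).2 < (c j).2)
    (hsep : (c (k-1)).1 < (c 0).2) : Contains E (Interleaving k) := by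
  set w : ℕ → ℕ := fun t => if t ≤ k then (c (t-1)).1 else (c (t-1-k)).2 with hw
  have hwstep : ∀ i, 1 ≤ i → i + 1 ≤ 2*k → w i < w (i+1) := by
    intro i hi1 hi2
    rcases Nat.lt_or_ge (i+1) (k+1) with h | h
    · have hval := (hmono (i-1) (i+1-1) (by omega) (by omega)).1
      simp only [hw]; split_ifs <;> first | exact (by assumption : False).elim | omega
    · rcases Nat.eq_or_lt_of_le h with heq | hlt
      · have hik : i = k := by omega
        rw [hik]
        simp only [hw]
        rw [show k + 1 - 1 - k = 0 by omega]
        split_ifs <;> first | exact (by assumption : False).elim | omega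
      · have hval := (hmono (i-1-k) (i+1-1-k) (by omega) (by omega)).2
        simp only [hw]; split_ifs <;> first | exact (by assumption : False).elim | omega
  have hbase : 1 ≤ w 1 := by
    have hval : 1 ≤ (c (1-1)).1 := hE1 _ (hmem (1-1) (by omega))
    simp only [hw]; split_ifs <;> first | exact (by assumption : False).elim | omega
  obtain ⟨φ, hφ, hφw⟩ := ext_mono (2*k) w (by omega) hbase hwstep
  refine ⟨φ, hφ, ?_⟩
  intro f hf
  simp only [Interleaving, Finset.mem_image, Finset.mem_Icc] at hf
  obtain ⟨i, ⟨hi1, hik⟩, rfl⟩ := hf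
  have e1 : φ i = (c (i-1)).1 := by
    rw [hφw i hi1 (by omega)]; simp only [hw]; split_ifs <;> first | exact (by assumption : False).elim | omega
  have e2 : φ (i+k) = (c (i-1)).2 := by
    rw [hφw (i+k) (by omega) (by omega)]
    simp only [hw]
    rw [show i + k - 1 - k = i - 1 by omega]
    split_ifs <;> first | exact (by assumption : False).elim | omega
  simp only [e1, e2]
  exact hmem _ (by omega)

lemma contains_LBN {E : Finset (ℕ × ℕ)} (k : ℕ) (hk : 2 ≤ k) (e : ℕ × ℕ) (he : e ∈ E)
    (he1 : 1 ≤ e.1) (c : ℕ → ℕ × ℕ)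
    (hmem : ∀ i, i < k - 1 → c i ∈ E)
    (horder : ∀ i j, i < j → j < k - 1 → (c i).1 < (c j).1 ∧ (c j).2 < (c i).2)
    (hin : ∀ i, i < k - 1 → e.1 < (c i).1 ∧ (c i).1 < e.2 ∧ e.2 < (c i).2) :
    Contains E (LeftBrokenNesting k) := by
  set w : ℕ → ℕ := fun t => if t = 1 then e.1 else if t ≤ k then (c (t-2)).1
    else if t = k + 1 then e.2 else (c (2*k - t)).2 with hw
  have hwstep : ∀ i, 1 ≤ i → i + 1 ≤ 2*k → w i < w (i+1) := by
    intro i hi1 hi2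
    rcases Nat.eq_or_lt_of_le hi1 with h1 | h1
    · have hval := (hin (i+1-2) (by omega)).1
      simp only [hw]; split_ifs <;> first | exact (by assumption : False).elim | omega
    · rcases Nat.lt_or_ge (i+1) (k+1) with h2 | h2
      · have hval := (horder (i-2) (i+1-2) (by omega) (by omega)).1
        simp only [hw]; split_ifs <;> first | exact (by assumption : False).elim | omega
      · rcases Nat.eq_or_lt_of_le h2 with h3 | h3
        · have hval := (hin (i-2) (by omega)).2.1
          simp only [hw]; split_ifs <;> first | exact (by assumption : False).elim | omega
        · rcases Nat.eq_or_lt_of_le h3 with h4 | h4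
          · have hval := (hin (2*k - (i+1)) (by omega)).2.2
            simp only [hw]; split_ifs <;> first | exact (by assumption : False).elim | omega
          · have hval := (horder (2*k - (i+1)) (2*k - i) (by omega) (by omega)).2
            simp only [hw]; split_ifs <;> first | exact (by assumption : False).elim | omega
  have hbase : 1 ≤ w 1 := by
    simp only [hw]; split_ifs <;> first | exact (by assumption : False).elim | omega
  obtain ⟨φ, hφ, hφw⟩ := ext_mono (2*k) w (by omega) hbase hwstep
  refine ⟨φ, hφ, ?_⟩
  intro f hf
  simp only [LeftBrokenNesting, Finset.mem_insert, Finset.mem_image, Finset.mem_Icc] at hf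
  rcases hf with hf | ⟨i, ⟨hi1, hik⟩, rfl⟩
  · subst hf
    have e1 : φ (1, k+1).1 = e.1 := by
      rw [hφw _ le_rfl (by omega)]; simp only [hw]; split_ifs <;> first | exact (by assumption : False).elim | omega
    have e2 : φ (1, k+1).2 = e.2 := by
      rw [hφw _ (by omega) (by omega)]; simp only [hw]; split_ifs <;> first | exact (by assumption : False).elim | omega
    rw [e1, e2]
    exact he
  · have e1 : φ (i+1) = (c (i-1)).1 := by
      rw [hφw (i+1) (by omega) (by omega)]
      simp only [hw]
      rw [show i + 1 - 2 = i - 1 by omega]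
      split_ifs <;> first | exact (by assumption : False).elim | omega
    have e2 : φ (2*k - i + 1) = (c (i-1)).2 := by
      rw [hφw (2*k - i + 1) (by omega) (by omega)]
      simp only [hw]
      rw [show 2*k - (2*k - i + 1) = i - 1 by omega]
      split_ifs <;> first | exact (by assumption : False).elim | omega
    rw [show ((i+1, 2*k-i+1) : ℕ × ℕ).1 = i + 1 from rfl, show ((i+1, 2*k-i+1) : ℕ × ℕ).2 = 2*k-i+1 from rfl,
      e1, e2]
    exact hmem _ (by omega)

lemma contains_RBN {E : Finset (ℕ × ℕ)} (k : ℕ) (hk : 2 ≤ k) (e : ℕ × ℕ) (he : e ∈ E)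
    (c : ℕ → ℕ × ℕ)
    (hmem : ∀ i, i < k - 1 → c i ∈ E)
    (hE1 : ∀ g ∈ E, 1 ≤ g.1)
    (horder : ∀ i j, i < j → j < k - 1 → (c i).1 < (c j).1 ∧ (c j).2 < (c i).2)
    (hin : ∀ i, i < k - 1 → (c i).1 < e.1 ∧ e.1 < (c i).2 ∧ (c i).2 < e.2) :
    Contains E (RightBrokenNesting k) := by
  set w : ℕ → ℕ := fun t => if t ≤ k - 1 then (c (t-1)).1 else if t = k then e.1
    else if t ≤ 2*k - 1 then (c (2*k - t - 1)).2 else e.2 with hw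
  have hwstep : ∀ i, 1 ≤ i → i + 1 ≤ 2*k → w i < w (i+1) := by
    intro i hi1 hi2
    rcases Nat.lt_or_ge (i+1) k with h1 | h1
    · have hval := (horder (i-1) (i+1-1) (by omega) (by omega)).1
      simp only [hw]; split_ifs <;> first | exact (by assumption : False).elim | omega
    · rcases Nat.eq_or_lt_of_le h1 with h2 | h2
      · have hval := (hin (i-1) (by omega)).1
        simp only [hw]; split_ifs <;> first | exact (by assumption : False).elim | omega
      · rcases Nat.eq_or_lt_of_le h2 with h3 | h3
        · have hval := (hin (2*k - (i+1) - 1) (by omega)).2.1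
          simp only [hw]; split_ifs <;> first | exact (by assumption : False).elim | omega
        · rcases Nat.lt_or_ge (i+1) (2*k) with h4 | h4
          · have hval := (horder (2*k - (i+1) - 1) (2*k - i - 1) (by omega) (by omega)).2
            simp only [hw]; split_ifs <;> first | exact (by assumption : False).elim | omega
          · have hval := (hin (2*k - i - 1) (by omega)).2.2
            simp only [hw]; split_ifs <;> first | exact (by assumption : False).elim | omega
  have hbase : 1 ≤ w 1 := by
    have hval : 1 ≤ (c (1-1)).1 := hE1 _ (hmem (1-1) (by omega))
    simp only [hw]; split_ifs <;> first | exact (by assumption : False).elim | omega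
  obtain ⟨φ, hφ, hφw⟩ := ext_mono (2*k) w (by omega) hbase hwstep
  refine ⟨φ, hφ, ?_⟩
  intro f hf
  simp only [RightBrokenNesting, Finset.mem_insert, Finset.mem_image, Finset.mem_Icc] at hf
  rcases hf with hf | ⟨i, ⟨hi1, hik⟩, rfl⟩
  · subst hf
    have e1 : φ ((k, 2*k) : ℕ × ℕ).1 = e.1 := by
      rw [hφw _ (by omega) (by omega)]; simp only [hw]; split_ifs <;> first | exact (by assumption : False).elim | omega
    have e2 : φ ((k, 2*k) : ℕ × ℕ).2 = e.2 := by
      rw [hφw _ (by omega) (by omega)]; simp only [hw]; split_ifs <;> first | exact (by assumption : False).elim | omega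
    rw [e1, e2]
    exact he
  · have e1 : φ i = (c (i-1)).1 := by
      rw [hφw i (by omega) (by omega)]
      simp only [hw]; split_ifs <;> first | exact (by assumption : False).elim | omega
    have e2 : φ (2*k - i) = (c (i-1)).2 := by
      rw [hφw (2*k - i) (by omega) (by omega)]
      simp only [hw]
      rw [show 2*k - (2*k - i) - 1 = i - 1 by omega]
      split_ifs <;> first | exact (by assumption : False).elim | omega
    rw [show ((i, 2*k-i) : ℕ × ℕ).1 = i from rfl, show ((i, 2*k-i) : ℕ × ℕ).2 = 2*k-i from rfl,
      e1, e2]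
    exact hmem _ (by omega)

-- ============ Case A : an edge with many crossers ============
lemma case_A {n k : ℕ} {E : Finset (ℕ × ℕ)} (hM : IsMatching n E) (hk : 2 ≤ k)
    {e : ℕ × ℕ} (he : e ∈ E)
    (hdeg : 2 * ((k-1) * (k-1) + 1) ≤ (E.filter (fun f => Crosses e f)).card) :
    Contains E (Interleaving k) ∨ Contains E (RightBrokenNesting k) ∨
      Contains E (LeftBrokenNesting k) := by
  classical
  set C := E.filter (fun f => Crosses e f) with hC
  have hsplit := Finset.card_filter_add_card_filter_not
    (s := C) (p := fun f => e.1 < f.1)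
  set R := C.filter (fun f => e.1 < f.1) with hR
  set L := C.filter (fun f => ¬ e.1 < f.1) with hL
  have hmemR : ∀ f ∈ R, f ∈ E ∧ e.1 < f.1 ∧ f.1 < e.2 ∧ e.2 < f.2 := by
    intro f hf
    rw [hR, Finset.mem_filter, hC, Finset.mem_filter] at hf
    obtain ⟨⟨hfE, hcr⟩, hgt⟩ := hf
    rcases hcr with h | h
    · exact ⟨hfE, h⟩
    · exact absurd hgt (by omega)
  have hmemL : ∀ f ∈ L, f ∈ E ∧ f.1 < e.1 ∧ e.1 < f.2 ∧ f.2 < e.2 := by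
    intro f hf
    rw [hL, Finset.mem_filter, hC, Finset.mem_filter] at hf
    obtain ⟨⟨hfE, hcr⟩, hgt⟩ := hf
    rcases hcr with h | h
    · exact absurd hgt (by tauto)
    · exact ⟨hfE, h⟩
  have hdistR : ∀ u ∈ R, ∀ v ∈ R, u ≠ v → u.1 ≠ v.1 ∧ u.2 ≠ v.2 := by
    intro u hu v hv huv
    have h := matching_distinct hM (hmemR u hu).1 (hmemR v hv).1 huv
    exact ⟨h.1, h.2.2.2⟩
  have hdistL : ∀ u ∈ L, ∀ v ∈ L, u ≠ v → u.1 ≠ v.1 ∧ u.2 ≠ v.2 := by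
    intro u hu v hv huv
    have h := matching_distinct hM (hmemL u hu).1 (hmemL v hv).1 huv
    exact ⟨h.1, h.2.2.2⟩
  have hE1 : ∀ g ∈ E, 1 ≤ g.1 := fun g hg => (hM.1 g hg).1
  have hbig : (k-1) * (k-1) + 1 ≤ R.card ∨ (k-1) * (k-1) + 1 ≤ L.card := by omega
  rcases hbig with hbigR | hbigL
  · rcases erdos_szekeres_pairs (k-1) (k-1) R hdistR hbigR with ⟨c, hcmem, hcmono⟩ | ⟨c, hcmem, hcmono⟩
    · -- k pairwise crossing, all type R : interleaving
      left
      apply contains_interleaving k (by omega) c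
      · intro i hi; exact (hmemR _ (hcmem i (by omega))).1
      · exact hE1
      · intro i j hij hj; exact hcmono i j hij (by omega)
      · -- (c (k-1)).1 < (c 0).2
        have h1 := (hmemR _ (hcmem (k-1) le_rfl)).2.2.1
        have h2 := (hmemR _ (hcmem 0 (by omega))).2.2.2
        omega
    · -- k-1 pairwise nested type-R crossers + e : LBN
      right; right
      apply contains_LBN k hk e he (hE1 e he) c
      · intro i hi; exact (hmemR _ (hcmem i (by omega))).1
      · intro i j hij hj; exact hcmono i j hij (by omega)
      · intro i hi
        have h := (hmemR _ (hcmem i (by omega))).2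
        exact ⟨h.1, h.2.1, h.2.2⟩
  · rcases erdos_szekeres_pairs (k-1) (k-1) L hdistL hbigL with ⟨c, hcmem, hcmono⟩ | ⟨c, hcmem, hcmono⟩
    · left
      apply contains_interleaving k (by omega) c
      · intro i hi; exact (hmemL _ (hcmem i (by omega))).1
      · exact hE1
      · intro i j hij hj; exact hcmono i j hij (by omega)
      · have h1 := (hmemL _ (hcmem (k-1) le_rfl)).2.1
        have h2 := (hmemL _ (hcmem 0 (by omega))).2.2.1
        omega
    · right; left
      apply contains_RBN k hk e he c
      · intro i hi; exact (hmemL _ (hcmem i (by omega))).1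
      · exact hE1
      · intro i j hij hj; exact hcmono i j hij (by omega)
      · intro i hi
        have h := (hmemL _ (hcmem i (by omega))).2
        exact ⟨h.1, h.2.1, h.2.2⟩

-- ============ Ball machinery in the crossing graph ============
noncomputable def ball (E : Finset (ℕ × ℕ)) (root : ℕ × ℕ) : ℕ → Finset (ℕ × ℕ)
  | 0 => {root}
  | (i+1) => ball E root i ∪ E.filter (fun f => ∃ g ∈ ball E root i, Crosses g f)

lemma ball_zero (E : Finset (ℕ × ℕ)) (root : ℕ × ℕ) : ball E root 0 = {root} := rfl

lemma ball_succ (E : Finset (ℕ × ℕ)) (root : ℕ × ℕ) (i : ℕ) :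
    ball E root (i+1) = ball E root i ∪ E.filter (fun f => ∃ g ∈ ball E root i, Crosses g f) := rfl

lemma ball_subset_succ {E : Finset (ℕ × ℕ)} {root : ℕ × ℕ} (i : ℕ) :
    ball E root i ⊆ ball E root (i+1) := by
  rw [ball_succ]; exact Finset.subset_union_left

lemma ball_mono {E : Finset (ℕ × ℕ)} {root : ℕ × ℕ} {i j : ℕ} (hij : i ≤ j) :
    ball E root i ⊆ ball E root j := by
  induction j with
  | zero => rw [Nat.le_zero.1 hij]
  | succ j ih =>
    rcases Nat.eq_or_lt_of_le hij with h | h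
    · rw [h]
    · exact (ih (by omega)).trans (ball_subset_succ j)

lemma ball_subset_E {E : Finset (ℕ × ℕ)} {root : ℕ × ℕ} (hroot : root ∈ E) (i : ℕ) :
    ball E root i ⊆ E := by
  induction i with
  | zero => intro x hx; rw [ball_zero, Finset.mem_singleton] at hx; rw [hx]; exact hroot
  | succ i ih =>
    rw [ball_succ]
    intro x hx
    rcases Finset.mem_union.1 hx with h | h
    · exact ih h
    · exact (Finset.mem_filter.1 h).1

lemma mem_ball_of_crosses {E : Finset (ℕ × ℕ)} {root : ℕ × ℕ} {i : ℕ} {g f : ℕ × ℕ}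
    (hg : g ∈ ball E root i) (hf : f ∈ E) (hcr : Crosses g f) : f ∈ ball E root (i+1) := by
  rw [ball_succ]
  exact Finset.mem_union.2 (Or.inr (Finset.mem_filter.2 ⟨hf, g, hg, hcr⟩))

lemma ball_triangle {E : Finset (ℕ × ℕ)} {g x : ℕ × ℕ} {j : ℕ} (hx : x ∈ ball E g j) :
    ∀ i h, h ∈ ball E x i → h ∈ ball E g (j + i) := by
  intro i
  induction i with
  | zero =>
    intro h hh
    rw [ball_zero, Finset.mem_singleton] at hh
    rw [hh]; simpa using hx
  | succ i ih =>
    intro h hh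
    rw [ball_succ] at hh
    rcases Finset.mem_union.1 hh with h' | h'
    · exact ball_subset_succ _ (ih h h')
    · obtain ⟨hhE, y, hy, hcr⟩ := Finset.mem_filter.1 h'
      exact mem_ball_of_crosses (ih y hy) hhE hcr

lemma ball_symm {E : Finset (ℕ × ℕ)} : ∀ (i : ℕ) (g h : ℕ × ℕ), h ∈ E →
    g ∈ ball E h i → h ∈ ball E g i := by
  intro i
  induction i with
  | zero =>
    intro g h _ hg
    rw [ball_zero, Finset.mem_singleton] at hg
    rw [hg]; simp [ball_zero]
  | succ i ih =>
    intro g h hhE hg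
    rw [ball_succ] at hg
    rcases Finset.mem_union.1 hg with h' | h'
    · exact ball_subset_succ _ (ih g h hhE h')
    · obtain ⟨hgE, x, hx, hcr⟩ := Finset.mem_filter.1 h'
      have hhx : h ∈ ball E x i := ih x h hhE hx
      have hxg : x ∈ ball E g 1 := by
        have hxE : x ∈ E := ball_subset_E hhE i hx
        exact mem_ball_of_crosses (by simp [ball_zero]) hxE (crosses_symm.1 hcr)
      have := ball_triangle hxg i h hhx
      rwa [Nat.add_comm] at this

lemma ball_card_le {E : Finset (ℕ × ℕ)} {root : ℕ × ℕ} {T : ℕ}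
    (hdeg : ∀ g ∈ E, (E.filter (fun f => Crosses g f)).card ≤ T - 1) (hT : 1 ≤ T)
    (hroot : root ∈ E) :
    ∀ i, (ball E root i).card ≤ T ^ i := by
  intro i
  induction i with
  | zero => simp [ball_zero]
  | succ i ih =>
    rw [ball_succ]
    have h1 : (E.filter (fun f => ∃ g ∈ ball E root i, Crosses g f)) ⊆
        (ball E root i).biUnion (fun g => E.filter (fun f => Crosses g f)) := by
      intro f hf
      obtain ⟨hfE, g, hg, hcr⟩ := Finset.mem_filter.1 hf
      exact Finset.mem_biUnion.2 ⟨g, hg, Finset.mem_filter.2 ⟨hfE, hcr⟩⟩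
    have h2 : ((ball E root i).biUnion (fun g => E.filter (fun f => Crosses g f))).card
        ≤ (ball E root i).card * (T - 1) := by
      calc ((ball E root i).biUnion (fun g => E.filter (fun f => Crosses g f))).card
          ≤ ∑ g ∈ ball E root i, (E.filter (fun f => Crosses g f)).card :=
            Finset.card_biUnion_le
        _ ≤ ∑ g ∈ ball E root i, (T-1) :=
            Finset.sum_le_sum (fun g hg => hdeg g (ball_subset_E hroot i hg))
        _ = (ball E root i).card * (T-1) := by rw [Finset.sum_const, smul_eq_mul]
    have h3 := Finset.card_union_le (ball E root i)
      (E.filter (fun f => ∃ g ∈ ball E root i, Crosses g f))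
    have h4 := Finset.card_le_card h1
    have h5 : T ^ (i+1) = T ^ i * T := by ring
    have h6 : (ball E root i).card * (T-1) ≤ T^i * (T-1) :=
      Nat.mul_le_mul_right _ ih
    obtain ⟨S, rfl⟩ : ∃ S, T = S + 1 := ⟨T-1, by omega⟩
    have h7 : (S+1)^i*(S+1-1) + (S+1)^i = (S+1)^i*(S+1) := by
      rw [show S + 1 - 1 = S from rfl]; ring
    omega

lemma ball_stab {E : Finset (ℕ × ℕ)} {root : ℕ × ℕ} {j : ℕ}
    (h : ball E root j = ball E root (j+1)) :
    ∀ m, j ≤ m → ball E root m = ball E root j := by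
  intro m hm
  induction m with
  | zero => rw [Nat.le_zero.1 hm]
  | succ m ih =>
    rcases Nat.eq_or_lt_of_le hm with h' | h' 
    · rw [← h']
    · have hjm : j ≤ m := by omega
      have heq := ih hjm
      rw [ball_succ, heq, ← ball_succ, ← h]

lemma exists_ball_stab {E : Finset (ℕ × ℕ)} (root : ℕ × ℕ) (hroot : root ∈ E) :
    ∃ j, ball E root j = ball E root (j+1) := by
  by_contra hcon
  push_neg at hcon
  have hgrow : ∀ j, j + 1 ≤ (ball E root j).card := by
    intro j
    induction j with
    | zero => simp [ball_zero]
    | succ j ih =>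
      have hss : ball E root j ⊂ ball E root (j+1) :=
        Finset.ssubset_iff_subset_ne.2 ⟨ball_subset_succ j, hcon j⟩
      have := Finset.card_lt_card hss
      omega
  have h1 := hgrow E.card
  have h2 := Finset.card_le_card (ball_subset_E hroot E.card)
  omega

-- ============ Shadows of balls are gapless; connectivity ============
lemma ball_shadow {E : Finset (ℕ × ℕ)} {f : ℕ × ℕ} (hfE : f ∈ E)
    (hsort : ∀ e ∈ E, e.1 < e.2) :
    ∀ i v, (∃ a ∈ ball E f i, a.1 ≤ v) → (∃ b ∈ ball E f i, v ≤ b.2) →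
      ∃ g ∈ ball E f i, g.1 ≤ v ∧ v ≤ g.2 := by
  intro i
  induction i with
  | zero =>
    intro v hA hB
    obtain ⟨a, ha, hav⟩ := hA
    obtain ⟨b, hb, hbv⟩ := hB
    rw [ball_zero, Finset.mem_singleton] at ha hb
    exact ⟨f, by simp [ball_zero], ha ▸ hav, hb ▸ hbv⟩
  | succ i ih =>
    intro v hA hB
    by_cases ha : ∃ a ∈ ball E f i, a.1 ≤ v
    · by_cases hb : ∃ b ∈ ball E f i, v ≤ b.2
      · obtain ⟨g, hg, h1, h2⟩ := ih v ha hb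
        exact ⟨g, ball_subset_succ i hg, h1, h2⟩
      · -- all old seconds are < v; use the new b-witness
        push_neg at hb
        obtain ⟨b, hbmem, hbv⟩ := hB
        have hbnew : b ∈ E.filter (fun x => ∃ g ∈ ball E f i, Crosses g x) := by
          rw [ball_succ] at hbmem
          rcases Finset.mem_union.1 hbmem with h | h
          · exact absurd hbv (by have := hb b h; omega)
          · exact h
        obtain ⟨hbE, g0, hg0, hcr⟩ := Finset.mem_filter.1 hbnew
        have hg02 : g0.2 < v := hb g0 hg0
        rcases hcr with hd | hd
        · exact ⟨b, hbmem, by omega, hbv⟩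
        · exact absurd hbv (by omega)
    · -- all old firsts are > v
      push_neg at ha
      obtain ⟨a, hamem, hav⟩ := hA
      have hanew : a ∈ E.filter (fun x => ∃ g ∈ ball E f i, Crosses g x) := by
        rw [ball_succ] at hamem
        rcases Finset.mem_union.1 hamem with h | h
        · exact absurd hav (by have := ha a h; omega)
        · exact h
      obtain ⟨haE, g0, hg0, hcr⟩ := Finset.mem_filter.1 hanew
      have hg01 : v < g0.1 := ha g0 hg0
      rcases hcr with hd | hd
      · exact absurd hav (by omega)
      · exact ⟨a, hamem, hav, by omega⟩

lemma comp_contains_one {n : ℕ} {E : Finset (ℕ × ℕ)} (hM : IsMatching n E)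
    (hind : Indecomposable n E) {f : ℕ × ℕ} (hfE : f ∈ E) {j : ℕ}
    (hstab : ball E f j = ball E f (j+1)) :
    ∃ g ∈ ball E f j, g.1 = 1 := by
  classical
  have hsort : ∀ e ∈ E, e.1 < e.2 := fun e he => (hM.1 e he).2.1
  set C := ball E f j with hC
  have hfC : f ∈ C := ball_mono (Nat.zero_le j) (by simp [ball_zero])
  have hCne : C.Nonempty := ⟨f, hfC⟩
  obtain ⟨el, helC, helmin⟩ := Finset.exists_min_image C Prod.fst hCne
  obtain ⟨er, herC, hermax⟩ := Finset.exists_max_image C Prod.snd hCne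
  have hCE : C ⊆ E := ball_subset_E hfE j
  have hclosed : ∀ g ∈ C, ∀ x ∈ E, Crosses g x → x ∈ C := by
    intro g hg x hx hcr
    have : x ∈ ball E f (j+1) := mem_ball_of_crosses hg hx hcr
    rwa [← hstab] at this
  have hint : IsInterval E el.1 er.2 := by
    intro e heE
    by_cases heC : e ∈ C
    · have h1 := helmin e heC
      have h2 := hermax e heC
      have h3 := hsort e heE
      have h4 := hsort el (hCE helC)
      have h5 := hermax el helC
      have h6 := helmin er herC
      constructor <;> intro <;> omega
    · have hsE := hsort e heE
      have hsel := hsort el (hCE helC)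
      have h5 := hermax el helC
      constructor
      · rintro ⟨h1, h2⟩
        obtain ⟨g, hgC, hg1, hg2⟩ := ball_shadow hfE hsort j e.1 ⟨el, helC, h1⟩ ⟨er, herC, h2⟩
        have hne : g ≠ e := fun h => heC (h ▸ hgC)
        have hdist := matching_distinct hM (hCE hgC) heE hne
        have hg2' := hermax g hgC
        constructor
        · omega
        · by_contra hcon
          have hcr : Crosses g e := Or.inl (by omega)
          exact heC (hclosed g hgC e heE hcr)
      · rintro ⟨h1, h2⟩
        obtain ⟨g, hgC, hg1, hg2⟩ := ball_shadow hfE hsort j e.2 ⟨el, helC, h1⟩ ⟨er, herC, h2⟩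
        have hne : g ≠ e := fun h => heC (h ▸ hgC)
        have hdist := matching_distinct hM (hCE hgC) heE hne
        have hg1' := helmin g hgC
        constructor
        · by_contra hcon
          have hcr : Crosses g e := Or.inr (by omega)
          exact heC (hclosed g hgC e heE hcr)
        · omega
  have h1l := (hM.1 el (hCE helC)).1
  have hlr : el.1 ≤ er.2 := by
    have := hsort el (hCE helC)
    have := hermax el helC
    omega
  have hr2n := (hM.1 er (hCE herC)).2.2
  obtain ⟨hone, _⟩ := hind el.1 er.2 h1l hlr hr2n hint
  exact ⟨el, helC, hone⟩

lemma exists_root {n : ℕ} {E : Finset (ℕ × ℕ)} (hM : IsMatching n E) (hn1 : 1 ≤ n) :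
    ∃ root ∈ E, root.1 = 1 := by
  obtain ⟨w, ⟨hwE, hv⟩, _⟩ := hM.2 1 (Finset.mem_Icc.2 ⟨le_rfl, by omega⟩)
  rcases hv with h | h
  · exact ⟨w, hwE, h.symm⟩
  · have := (hM.1 w hwE).1
    have := (hM.1 w hwE).2.1
    omega

lemma conn {n : ℕ} {E : Finset (ℕ × ℕ)} (hM : IsMatching n E) (hind : Indecomposable n E)
    {root : ℕ × ℕ} (hrootE : root ∈ E) (hroot1 : root.1 = 1) :
    ∀ f ∈ E, ∃ i, f ∈ ball E root i := by
  intro f hfE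
  obtain ⟨j, hstab⟩ := exists_ball_stab f hfE
  obtain ⟨g, hgC, hg1⟩ := comp_contains_one hM hind hfE hstab
  have hgroot : g = root := by
    by_contra hne
    have := (matching_distinct hM (ball_subset_E hfE j hgC) hrootE hne).1
    omega
  rw [hgroot] at hgC
  exact ⟨j, ball_symm j root f hfE hgC⟩

lemma E_subset_ball {E : Finset (ℕ × ℕ)} {root : ℕ × ℕ}
    (hconn : ∀ f ∈ E, ∃ i, f ∈ ball E root i) {j : ℕ}
    (hstab : ball E root j = ball E root (j+1)) : E ⊆ ball E root j := by
  intro f hfE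
  obtain ⟨i, hi⟩ := hconn f hfE
  rcases Nat.lt_or_ge j i with h | h
  · rw [← ball_stab hstab i (by omega)]; exact hi
  · exact ball_mono (by omega) hi

-- ============ Geodesic path extraction ============
lemma exists_path {E : Finset (ℕ × ℕ)} {root : ℕ × ℕ} (hrootE : root ∈ E) (M : ℕ) (hM1 : 1 ≤ M)
    (hstrict : ∀ j, j < M → ball E root j ≠ ball E root (j+1)) :
    ∃ q : ℕ → ℕ × ℕ, (∀ t ≤ M, q t ∈ ball E root (M - t)) ∧
      (∀ t ≤ M, 1 ≤ M - t → q t ∉ ball E root (M - t - 1)) ∧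
      (∀ t, t < M → Crosses (q (t+1)) (q t)) := by
  have hclaim : ∀ d, d ≤ M → ∃ q : ℕ → ℕ × ℕ, (∀ t ≤ d, q t ∈ ball E root (M - t)) ∧
      (∀ t ≤ d, 1 ≤ M - t → q t ∉ ball E root (M - t - 1)) ∧
      (∀ t, t < d → Crosses (q (t+1)) (q t)) := by
    intro d
    induction d with
    | zero =>
      intro _
      have hne : ball E root (M-1) ≠ ball E root M := by
        have := hstrict (M-1) (by omega)
        rw [show M - 1 + 1 = M by omega] at this
        exact this
      have hss : ball E root (M-1) ⊂ ball E root M :=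
        Finset.ssubset_iff_subset_ne.2 ⟨ball_mono (by omega), hne⟩
      obtain ⟨x, hxM, hxM1⟩ := Finset.exists_of_ssubset hss
      refine ⟨fun _ => x, ?_, ?_, ?_⟩
      · intro t ht
        rw [Nat.le_zero.1 ht, Nat.sub_zero]
        exact hxM
      · intro t ht _
        rw [Nat.le_zero.1 ht, Nat.sub_zero]
        exact hxM1
      · intro t ht; omega
    | succ d ih =>
      intro hd1
      obtain ⟨q, hq1, hq2, hq3⟩ := ih (by omega)
      have hx1 : q d ∈ ball E root (M - d) := hq1 d le_rfl
      have hx2 : q d ∉ ball E root (M - d - 1) := hq2 d le_rfl (by omega)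
      have hsplit : q d ∈ ball E root ((M - d - 1) + 1) := by
        rw [show M - d - 1 + 1 = M - d by omega]; exact hx1
      rw [ball_succ] at hsplit
      rcases Finset.mem_union.1 hsplit with hbad | hgood
      · exact absurd hbad hx2
      · obtain ⟨hxE, g, hg, hcr⟩ := Finset.mem_filter.1 hgood
        refine ⟨fun t => if t = d + 1 then g else q t, ?_, ?_, ?_⟩
        · intro t ht
          beta_reduce
          by_cases hteq : t = d + 1
          · rw [if_pos hteq, hteq, show M - (d+1) = M - d - 1 by omega]
            exact hg
          · rw [if_neg hteq]; exact hq1 t (by omega)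
        · intro t ht hMt
          beta_reduce
          by_cases hteq : t = d + 1
          · rw [if_pos hteq, hteq]
            intro hcon
            have : q d ∈ ball E root ((M - (d+1) - 1) + 1) :=
              mem_ball_of_crosses hcon hxE hcr
            rw [show M - (d+1) - 1 + 1 = M - d - 1 by omega] at this
            exact hx2 this
          · rw [if_neg hteq]; exact hq2 t (by omega) hMt
        · intro t ht
          beta_reduce
          by_cases hteq : t = d
          · rw [if_pos (by omega : t + 1 = d + 1), if_neg (by omega : ¬ t = d + 1), hteq]
            exact hcr
          · rw [if_neg (by omega : ¬ t + 1 = d + 1), if_neg (by omega : ¬ t = d + 1)]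
            exact hq3 t (by omega)
  exact hclaim M le_rfl

-- ============ The window pin-sequence lemma ============
lemma window_pin {n : ℕ} {E : Finset (ℕ × ℕ)} (hM : IsMatching n E) (k : ℕ) (hk : 1 ≤ k)
    (q : ℕ → ℕ × ℕ)
    (hqE : ∀ t, t < k → q t ∈ E)
    (hqd : ∀ t t', t < t' → t' < k → q t ≠ q t')
    (hcons : ∀ t, t + 1 < k → Crosses (q t) (q (t+1)))
    (hnc : ∀ t t', t + 2 ≤ t' → t' < k → ¬ Crosses (q t) (q t'))
    (hnf : ∀ t t', t + 2 ≤ t' → t' < k → ¬ ((q t).1 < (q t').1 ∧ (q t').2 < (q t).2)) :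
    ∃ L : List (ℕ × ℕ), L.length = k ∧ L.Nodup ∧ (∀ e ∈ L, e ∈ E) ∧ IsProperPinSeq L := by
  have hsort : ∀ t, t < k → (q t).1 < (q t).2 := fun t ht => (hM.1 _ (hqE t ht)).2.1
  have hdist : ∀ t t', t < t' → t' < k →
      (q t).1 ≠ (q t').1 ∧ (q t).1 ≠ (q t').2 ∧ (q t).2 ≠ (q t').1 ∧ (q t).2 ≠ (q t').2 :=
    fun t t' h1 h2 => matching_distinct hM (hqE t (by omega)) (hqE t' h2) (hqd t t' h1 h2)
  -- the union of the spans of a prefix is gapless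
  have hpre : ∀ i, 1 ≤ i → i ≤ k → ∀ v, (∃ t, t < i ∧ (q t).1 ≤ v) →
      (∃ t, t < i ∧ v ≤ (q t).2) → ∃ t, t < i ∧ (q t).1 ≤ v ∧ v ≤ (q t).2 := by
    intro i
    induction i with
    | zero => intro h; omega
    | succ i ih =>
      intro _ hik v hA hB
      rcases Nat.eq_zero_or_pos i with hi0 | hip
      · subst hi0
        obtain ⟨ta, hta, hva⟩ := hA
        obtain ⟨tb, htb, hvb⟩ := hB
        have h1 : ta = 0 := by omega
        have h2 : tb = 0 := by omega
        subst h1; subst h2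
        exact ⟨0, by omega, hva, hvb⟩
      · by_cases hA' : ∃ t, t < i ∧ (q t).1 ≤ v
        · by_cases hB' : ∃ t, t < i ∧ v ≤ (q t).2
          · obtain ⟨t, ht, h⟩ := ih hip (by omega) v hA' hB'
            exact ⟨t, by omega, h⟩
          · push_neg at hB'
            by_cases hqi1 : (q i).1 ≤ v
            · obtain ⟨tb, htb, hvb⟩ := hB
              have htbi : tb = i := by
                rcases Nat.lt_or_ge tb i with h | h
                · exact absurd hvb (by have := hB' tb h; omega)
                · omega
              subst htbi
              exact ⟨tb, by omega, hqi1, hvb⟩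
            · exfalso
              have hcr := hcons (i-1) (by omega)
              rw [show i - 1 + 1 = i by omega] at hcr
              have h2 := hB' (i-1) (by omega)
              unfold Crosses at hcr
              omega
        · push_neg at hA'
          obtain ⟨ta, hta, hva⟩ := hA
          have htai : ta = i := by
            rcases Nat.lt_or_ge ta i with h | h
            · exact absurd hva (by have := hA' ta h; omega)
            · omega
          subst htai
          by_cases hqi2 : v ≤ (q ta).2
          · exact ⟨ta, by omega, hva, hqi2⟩
          · exfalso
            have hcr := hcons (ta-1) (by omega)
            rw [show ta - 1 + 1 = ta by omega] at hcr
            have h2 := hA' (ta-1) (by omega)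
            unfold Crosses at hcr
            omega
  -- outer fact : for t ≤ i-2, the endpoints of q i avoid the closed span of q t
  have hout : ∀ t i, t + 2 ≤ i → i < k →
      ¬ ((q t).1 ≤ (q i).1 ∧ (q i).1 ≤ (q t).2) ∧
      ¬ ((q t).1 ≤ (q i).2 ∧ (q i).2 ≤ (q t).2) := by
    intro t i hti hik
    have h1 := hnc t i hti hik
    have h2 := hnf t i hti hik
    have h3 := hdist t i (by omega) hik
    have h4 := hsort t (by omega)
    have h5 := hsort i hik
    unfold Crosses at h1
    omega
  refine ⟨(List.range k).map q, by simp, ?_, ?_, ?_, ?_⟩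
  · -- Nodup
    refine List.Nodup.map_on ?_ List.nodup_range
    intro x hx y hy hxy
    rw [List.mem_range] at hx hy
    by_contra hne
    rcases Nat.lt_or_ge x y with h | h
    · exact hqd x y h hy hxy
    · exact hqd y x (by omega) hx hxy.symm
  · -- membership
    intro e he
    rw [List.mem_map] at he
    obtain ⟨t, ht, rfl⟩ := he
    exact hqE t (List.mem_range.1 ht)
  · -- IsPinSeq
    intro i hlen hi0
    rw [List.length_map, List.length_range] at hlen
    have hget : ((List.range k).map q).get ⟨i, by simp [hlen]⟩ = q i := by
      simp
    have htake : ((List.range k).map q).take i = (List.range i).map q := by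
      rw [← List.map_take, List.take_range, Nat.min_def, if_pos (by omega : i ≤ k)]
    rw [hget, htake]
    have hshadow : ∀ v, InShadow ((List.range i).map q) v ↔
        ((∃ t, t < i ∧ (q t).1 ≤ v) ∧ (∃ t, t < i ∧ v ≤ (q t).2)) := by
      intro v
      unfold InShadow
      constructor
      · rintro ⟨⟨a, ha, h⟩, ⟨b, hb, h'⟩⟩
        rw [List.mem_map] at ha hb
        obtain ⟨t, ht, rfl⟩ := ha
        obtain ⟨s, hs, rfl⟩ := hb
        exact ⟨⟨t, List.mem_range.1 ht, h⟩, ⟨s, List.mem_range.1 hs, h'⟩⟩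
      · rintro ⟨⟨t, ht, h⟩, ⟨s, hs, h'⟩⟩
        exact ⟨⟨q t, List.mem_map.2 ⟨t, List.mem_range.2 ht, rfl⟩, h⟩,
          ⟨q s, List.mem_map.2 ⟨s, List.mem_range.2 hs, rfl⟩, h'⟩⟩
    have hcr := hcons (i-1) (by omega)
    rw [show i - 1 + 1 = i by omega] at hcr
    have hnotsh : ∀ z, (∀ t, t + 2 ≤ i → ¬((q t).1 ≤ z ∧ z ≤ (q t).2)) →
        ¬ ((q (i-1)).1 ≤ z ∧ z ≤ (q (i-1)).2) → ¬ InShadow ((List.range i).map q) z := by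
      intro z hz1 hz2 hsh
      rw [hshadow] at hsh
      obtain ⟨t, ht, h1, h2⟩ := hpre i (by omega) (by omega) z hsh.1 hsh.2
      rcases Nat.lt_or_ge t (i-1) with h | h
      · exact hz1 t (by omega) ⟨h1, h2⟩
      · have : t = i - 1 := by omega
        subst this
        exact hz2 ⟨h1, h2⟩
    unfold SplitsL
    rcases hcr with hd | hd
    · -- inner endpoint is (q i).1
      left
      constructor
      · rw [hshadow]
        exact ⟨⟨i-1, by omega, by omega⟩, ⟨i-1, by omega, by omega⟩⟩
      · refine hnotsh (q i).2 ?_ (by omega)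
        intro t ht
        have := (hout t i (by omega) (by omega)).2
        omega
    · -- inner endpoint is (q i).2
      right
      constructor
      · rw [hshadow]
        exact ⟨⟨i-1, by omega, by omega⟩, ⟨i-1, by omega, by omega⟩⟩
      · refine hnotsh (q i).1 ?_ (by omega)
        intro t ht
        have := (hout t i (by omega) (by omega)).1
        omega
  · -- proper
    intro i hlen hi2
    rw [List.length_map, List.length_range] at hlen
    have hget : ((List.range k).map q).get ⟨i, by simp [hlen]⟩ = q i := by
      simp
    have htake : ((List.range k).map q).take (i-1) = (List.range (i-1)).map q := by
      rw [← List.map_take, List.take_range, Nat.min_def, if_pos (by omega : i - 1 ≤ k)]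
    rw [hget, htake]
    have hshadow : ∀ v, InShadow ((List.range (i-1)).map q) v ↔
        ((∃ t, t < i-1 ∧ (q t).1 ≤ v) ∧ (∃ t, t < i-1 ∧ v ≤ (q t).2)) := by
      intro v
      unfold InShadow
      constructor
      · rintro ⟨⟨a, ha, h⟩, ⟨b, hb, h'⟩⟩
        rw [List.mem_map] at ha hb
        obtain ⟨t, ht, rfl⟩ := ha
        obtain ⟨s, hs, rfl⟩ := hb
        exact ⟨⟨t, List.mem_range.1 ht, h⟩, ⟨s, List.mem_range.1 hs, h'⟩⟩
      · rintro ⟨⟨t, ht, h⟩, ⟨s, hs, h'⟩⟩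
        exact ⟨⟨q t, List.mem_map.2 ⟨t, List.mem_range.2 ht, rfl⟩, h⟩,
          ⟨q s, List.mem_map.2 ⟨s, List.mem_range.2 hs, rfl⟩, h'⟩⟩
    have hnotsh : ∀ z, (∀ t, t + 2 ≤ i → ¬((q t).1 ≤ z ∧ z ≤ (q t).2)) →
        ¬ InShadow ((List.range (i-1)).map q) z := by
      intro z hz1 hsh
      rw [hshadow] at hsh
      obtain ⟨t, ht, h1, h2⟩ := hpre (i-1) (by omega) (by omega) z hsh.1 hsh.2
      exact hz1 t (by omega) ⟨h1, h2⟩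
    have h1 : ¬ InShadow ((List.range (i-1)).map q) (q i).1 := by
      refine hnotsh _ ?_
      intro t ht
      have := (hout t i (by omega) (by omega)).1
      omega
    have h2 : ¬ InShadow ((List.range (i-1)).map q) (q i).2 := by
      refine hnotsh _ ?_
      intro t ht
      have := (hout t i (by omega) (by omega)).2
      omega
    unfold SplitsL
    rintro (⟨ha, hb⟩ | ⟨ha, hb⟩)
    · exact h1 ha
    · exact h2 ha

-- ============ Confinement lemmas ============
lemma conf_up {n M : ℕ} {E : Finset (ℕ × ℕ)} (hM : IsMatching n E) (e : ℕ → ℕ × ℕ)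
    (heE : ∀ i, i ≤ M → e i ∈ E)
    (hed : ∀ i j, i < j → j ≤ M → e i ≠ e j)
    (hcons : ∀ i, i < M → Crosses (e i) (e (i+1)))
    (hnc : ∀ i j, i + 2 ≤ j → j ≤ M → ¬ Crosses (e i) (e j))
    {a b : ℕ} (hab : a + 2 ≤ b) (hbM : b ≤ M)
    (hfold : (e a).1 < (e b).1 ∧ (e b).2 < (e a).2) :
    ∀ l, b ≤ l → l ≤ M → (e a).1 < (e l).1 ∧ (e l).2 < (e a).2 := by
  intro l
  induction l with
  | zero => intro h1 h2; omega
  | succ l ih =>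
    intro h1 h2
    rcases Nat.eq_or_lt_of_le h1 with heq | hlt
    · rw [← heq]; exact hfold
    · have hIH := ih (by omega) (by omega)
      have hcr := hcons l (by omega)
      have hncl := hnc a (l+1) (by omega) h2
      have hd := matching_distinct hM (heE a (by omega)) (heE (l+1) h2)
        (hed a (l+1) (by omega) h2)
      have hs1 := (hM.1 _ (heE a (by omega))).2.1
      have hs2 := (hM.1 _ (heE (l+1) h2)).2.1
      have hs3 := (hM.1 _ (heE l (by omega))).2.1
      unfold Crosses at hcr hncl
      omega

lemma conf_down {n M : ℕ} {E : Finset (ℕ × ℕ)} (hM : IsMatching n E) (e : ℕ → ℕ × ℕ)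
    (heE : ∀ i, i ≤ M → e i ∈ E)
    (hed : ∀ i j, i < j → j ≤ M → e i ≠ e j)
    (hcons : ∀ i, i < M → Crosses (e i) (e (i+1)))
    (hnc : ∀ i j, i + 2 ≤ j → j ≤ M → ¬ Crosses (e i) (e j))
    {a b : ℕ} (hab : a + 2 ≤ b) (hbM : b ≤ M)
    (hfold : (e b).1 < (e a).1 ∧ (e a).2 < (e b).2) :
    ∀ d, d ≤ a → (e b).1 < (e (a - d)).1 ∧ (e (a - d)).2 < (e b).2 := by
  intro d
  induction d with
  | zero => intro _; rw [Nat.sub_zero]; exact hfold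
  | succ d ih =>
    intro hda
    have hIH := ih (by omega)
    have hcr := hcons (a - d - 1) (by omega)
    rw [show a - d - 1 + 1 = a - d by omega] at hcr
    have hncl := hnc (a - d - 1) b (by omega) hbM
    have hd := matching_distinct hM (heE (a-d-1) (by omega)) (heE b hbM)
      (hed (a-d-1) b (by omega) hbM)
    have hs1 := (hM.1 _ (heE (a-d-1) (by omega))).2.1
    have hs2 := (hM.1 _ (heE b hbM)).2.1
    have hs3 := (hM.1 _ (heE (a-d) (by omega))).2.1
    rw [show a - (d+1) = a - d - 1 by omega]
    unfold Crosses at hcr hncl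
    omega

-- ============ Case B : all crossing degrees small ============
lemma case_B {n k : ℕ} {E : Finset (ℕ × ℕ)} (hM : IsMatching n E) (hind : Indecomposable n E)
    (hk : 2 ≤ k) (hn : (2 * k ^ 2) ^ (2 * k) + 1 ≤ n)
    (hdeg : ∀ g ∈ E, (E.filter (fun f => Crosses g f)).card ≤ 2 * ((k-1)*(k-1)+1) - 1) :
    ∃ L : List (ℕ × ℕ), L.length = k ∧ L.Nodup ∧ (∀ e ∈ L, e ∈ E) ∧ IsProperPinSeq L := by
  classical
  set T := 2 * ((k-1)*(k-1)+1) with hT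
  have hT1 : 1 ≤ T := by omega
  have hTk : T ≤ 2 * k^2 := by
    obtain ⟨m, rfl⟩ : ∃ m, k = m + 1 := ⟨k-1, by omega⟩
    have h1 : (m+1)^2 = m*m + 2*m + 1 := by ring
    have h2 : m + 1 - 1 = m := rfl
    rw [hT, h2, h1]
    nlinarith
  set M := 2*k - 2 with hMdef
  have hM1 : 1 ≤ M := by omega
  have hn1 : 1 ≤ n := by
    have : 1 ≤ (2*k^2)^(2*k) := Nat.one_le_pow _ _ (by positivity)
    omega
  obtain ⟨root, hrootE, hroot1⟩ := exists_root hM hn1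
  have hconn := conn hM hind hrootE hroot1
  have hstrict : ∀ j, j < M → ball E root j ≠ ball E root (j+1) := by
    intro j hj heq
    have hsub := E_subset_ball hconn heq
    have h1 : n ≤ E.card := n_le_card hM
    have h2 : E.card ≤ (ball E root j).card := Finset.card_le_card hsub
    have h3 : (ball E root j).card ≤ T ^ j := ball_card_le hdeg hT1 hrootE j
    have h4 : T ^ j ≤ (2*k^2) ^ j := Nat.pow_le_pow_left hTk j
    have h5 : (2*k^2) ^ j ≤ (2*k^2) ^ (2*k) := Nat.pow_le_pow_right (by positivity) (by omega)
    omega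
  obtain ⟨q, hq1, hq2, hq3⟩ := exists_path hrootE M hM1 hstrict
  set e : ℕ → ℕ × ℕ := fun i => q (M - i) with he
  have heball : ∀ i, i ≤ M → e i ∈ ball E root i := by
    intro i hi
    have := hq1 (M - i) (by omega)
    rw [show M - (M - i) = i by omega] at this
    exact this
  have heE : ∀ i, i ≤ M → e i ∈ E := fun i hi => ball_subset_E hrootE i (heball i hi)
  have henot : ∀ i, 1 ≤ i → i ≤ M → e i ∉ ball E root (i-1) := by
    intro i h1 h2
    have := hq2 (M - i) (by omega) (by omega)
    rw [show M - (M - i) - 1 = i - 1 by omega] at this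
    exact this
  have hcons : ∀ i, i < M → Crosses (e i) (e (i+1)) := by
    intro i hi
    have := hq3 (M - i - 1) (by omega)
    rw [show M - i - 1 + 1 = M - i by omega] at this
    rw [he]
    beta_reduce
    rw [show M - (i+1) = M - i - 1 by omega]
    exact this
  have hnc : ∀ i j, i + 2 ≤ j → j ≤ M → ¬ Crosses (e i) (e j) := by
    intro i j hij hjM hcr
    have h1 : e j ∈ ball E root (i+1) :=
      mem_ball_of_crosses (heball i (by omega)) (heE j hjM) hcr
    have h2 : e j ∈ ball E root (j-1) := ball_mono (by omega) h1
    exact henot j (by omega) hjM h2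
  have hed : ∀ i j, i < j → j ≤ M → e i ≠ e j := by
    intro i j hij hjM heq
    have h1 : e i ∈ ball E root (j-1) := ball_mono (by omega) (heball i (by omega))
    rw [heq] at h1
    exact henot j (by omega) hjM h1
  by_cases hfold1 : ∃ t t', t + 2 ≤ t' ∧ t' ≤ k-1 ∧ (e t).1 < (e t').1 ∧ (e t').2 < (e t).2
  · by_cases hfold2 : ∃ a b, a + 2 ≤ b ∧ b ≤ M ∧ k-1 ≤ a ∧ (e b).1 < (e a).1 ∧ (e a).2 < (e b).2
    · exfalso
      obtain ⟨t, t', h1, h2, h3, h4⟩ := hfold1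
      obtain ⟨a, b, g1, g2, g3, g4, g5⟩ := hfold2
      have H1 := conf_up hM e heE hed hcons hnc h1 (by omega) ⟨h3, h4⟩ b (by omega) g2
      have H2 := conf_down hM e heE hed hcons hnc g1 g2 ⟨g4, g5⟩ (a - t) (by omega)
      rw [show a - (a - t) = t by omega] at H2
      omega
    · push_neg at hfold2
      apply window_pin hM k (by omega) (fun t => e (M - t))
      · intro t ht; exact heE (M - t) (by omega)
      · intro t t' h1 h2 heq
        exact hed (M - t') (M - t) (by omega) (by omega) heq.symm
      · intro t ht
        have := hcons (M - t - 1) (by omega)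
        rw [show M - t - 1 + 1 = M - t by omega] at this
        beta_reduce
        rw [show M - (t+1) = M - t - 1 by omega]
        exact crosses_symm.1 this
      · intro t t' h1 h2 hcr
        exact hnc (M - t') (M - t) (by omega) (by omega) (crosses_symm.1 hcr)
      · intro t t' h1 h2
        beta_reduce
        intro ⟨hx, hy⟩
        have := hfold2 (M - t') (M - t) (by omega) (by omega) (by omega) hx
        omega
  · push_neg at hfold1
    apply window_pin hM k (by omega) e
    · intro t ht; exact heE t (by omega)
    · intro t t' h1 h2; exact hed t t' h1 (by omega)
    · intro t ht; exact hcons t (by omega)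
    · intro t t' h1 h2; exact hnc t t' h1 (by omega)
    · intro t t' h1 h2
      intro ⟨hx, hy⟩
      have := hfold1 t t' h1 (by omega) hx
      omega

theorem stmt7 (n k : ℕ) (E : Finset (ℕ × ℕ)) (hM : IsMatching n E)
    (hind : Indecomposable n E) (hn : (2 * k ^ 2) ^ (2 * k) + 1 ≤ n) :
    Contains E (Interleaving k) ∨ Contains E (RightBrokenNesting k) ∨
      Contains E (LeftBrokenNesting k) ∨
      ∃ L : List (ℕ × ℕ), L.length = k ∧ L.Nodup ∧ (∀ e ∈ L, e ∈ E) ∧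
        IsProperPinSeq L := by
  classical
  rcases Nat.lt_or_ge k 2 with hk | hk
  · rcases Nat.eq_zero_or_pos k with hk0 | hk1
    · subst hk0
      right; right; right
      refine ⟨[], rfl, List.nodup_nil, ?_, ?_, ?_⟩
      · intro e he; simp at he
      · intro i h hi; simp at h
      · intro i h hi; simp at h
    · have hk1' : k = 1 := by omega
      subst hk1'
      have hn1 : 1 ≤ n := by
        have : 1 ≤ (2*1^2)^(2*1) := Nat.one_le_pow _ _ (by norm_num)
        omega
      obtain ⟨root, hrootE, -⟩ := exists_root hM hn1
      right; right; right
      refine ⟨[root], rfl, List.nodup_singleton root, ?_, ?_, ?_⟩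
      · intro e he
        rw [List.mem_singleton] at he
        rw [he]; exact hrootE
      · intro i h hi
        simp only [List.length_singleton] at h
        omega
      · intro i h hi
        simp only [List.length_singleton] at h
        omega
  · by_cases hdeg : ∃ g ∈ E, 2 * ((k-1)*(k-1)+1) ≤ (E.filter (fun f => Crosses g f)).card
    · obtain ⟨g, hgE, hg⟩ := hdeg
      rcases case_A hM hk hgE hg with h | h | h
      · exact Or.inl h
      · exact Or.inr (Or.inl h)
      · exact Or.inr (Or.inr (Or.inl h))
    · push_neg at hdeg
      refine Or.inr (Or.inr (Or.inr (case_B hM hind hk hn ?_)))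
      intro g hg
      have := hdeg g hg
      omega
end

section
/- In any pin sequence p_1, ..., p_m (each p_i for i ≥ 2 splits the shadow of the previous pins), the edge p_i crosses at least one edge among p_1, ..., p_{i-1}; in particular the graph on the pins where adjacency is crossing is connected. -/
lemma memTake {α : Type*} {L : List α} {i : ℕ} {e : α} :
    e ∈ L.take i ↔ ∃ j, ∃ hj : j < L.length, j < i ∧ L.get ⟨j, hj⟩ = e := by
  rw [List.mem_take_iff_getElem]
  constructor
  · rintro ⟨j, hm, rfl⟩
    exact ⟨j, (lt_min_iff.mp hm).2, (lt_min_iff.mp hm).1, rfl⟩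
  · rintro ⟨j, hj, hji, rfl⟩
    exact ⟨j, lt_min_iff.mpr ⟨hji, hj⟩, rfl⟩


lemma cover (L : List (ℕ × ℕ)) (hpin : IsPinSeq L) :
    ∀ i, 0 < i → i ≤ L.length → ∀ v, InShadow (L.take i) v →
      ∃ e ∈ L.take i, e.1 ≤ v ∧ v ≤ e.2 := by
  intro i
  induction i with
  | zero => omega
  | succ i ih =>
    intro _ hle v hv
    obtain ⟨⟨a, ha, hav⟩, ⟨b, hb, hvb⟩⟩ := hv
    rcases Nat.eq_zero_or_pos i with rfl | hi
    · obtain ⟨ja, hja, hja1, rfl⟩ := memTake.mp ha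
      obtain ⟨jb, hjb, hjb1, hbeq⟩ := memTake.mp hb
      have hja0 : ja = 0 := by omega
      have hjb0 : jb = 0 := by omega
      subst hja0; subst hjb0
      refine ⟨_, ha, hav, ?_⟩
      rw [← hbeq] at hvb; exact hvb
    · by_cases hvold : InShadow (L.take i) v
      · obtain ⟨e, he, h1, h2⟩ := ih hi (by omega) v hvold
        obtain ⟨j, hj, hji, rfl⟩ := memTake.mp he
        exact ⟨_, memTake.mpr ⟨j, hj, by omega, rfl⟩, h1, h2⟩
      · have hs := hpin i (by omega) hi
        rcases not_and_or.mp hvold with hA | hB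
        · -- no a ∈ take i with a.1 ≤ v
          obtain ⟨ja, hja, hja1, rfl⟩ := memTake.mp ha
          have hja2 : ja = i := by
            by_contra hne
            exact hA ⟨_, memTake.mpr ⟨ja, hja, by omega, rfl⟩, hav⟩
          subst hja2
          obtain ⟨jb, hjb, hjb1, rfl⟩ := memTake.mp hb
          by_cases hjbi : jb = ja
          · subst hjbi
            exact ⟨_, ha, hav, hvb⟩
          · have hnx : ¬ InShadow (L.take ja) (L.get ⟨ja, hja⟩).1 := by
              rintro ⟨⟨a', ha', h'⟩, -⟩
              exact hA ⟨a', ha', le_trans h' hav⟩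
            have hy : InShadow (L.take ja) (L.get ⟨ja, hja⟩).2 := by
              rcases hs with ⟨h1, h2⟩ | ⟨h1, h2⟩
              · exact absurd h1 hnx
              · exact h1
            obtain ⟨⟨a', ha', h'⟩, -⟩ := hy
            have hlt : v < a'.1 := by
              by_contra hcon
              exact hA ⟨a', ha', by omega⟩
            exact ⟨_, ha, hav, by omega⟩
        · -- no b ∈ take i with v ≤ b.2
          obtain ⟨jb, hjb, hjb1, rfl⟩ := memTake.mp hb
          have hjb2 : jb = i := by
            by_contra hne
            exact hB ⟨_, memTake.mpr ⟨jb, hjb, by omega, rfl⟩, hvb⟩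
          subst hjb2
          have hny : ¬ InShadow (L.take jb) (L.get ⟨jb, hjb⟩).2 := by
            rintro ⟨-, ⟨b', hb', h'⟩⟩
            exact hB ⟨b', hb', le_trans hvb h'⟩
          have hx : InShadow (L.take jb) (L.get ⟨jb, hjb⟩).1 := by
            rcases hs with ⟨h1, h2⟩ | ⟨h1, h2⟩
            · exact h1
            · exact absurd h1 hny
          obtain ⟨-, ⟨b', hb', h'⟩⟩ := hx
          have hlt : b'.2 < v := by
            by_contra hcon
            exact hB ⟨b', hb', by omega⟩
          exact ⟨_, hb, by omega, hvb⟩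


theorem stmt10 (L : List (ℕ × ℕ)) (hne : L ≠ [])
    (horder : ∀ e ∈ L, e.1 < e.2)
    (hdisj : (L.map Prod.fst ++ L.map Prod.snd).Nodup)
    (hpin : IsPinSeq L) :
    (∀ i (h : i < L.length), 0 < i →
        ∃ j, ∃ hj : j < L.length, j < i ∧ Crosses (L.get ⟨j, hj⟩) (L.get ⟨i, h⟩)) ∧
      (SimpleGraph.fromRel fun s t : Fin L.length => Crosses (L.get s) (L.get t)).Connected := by
  have hlen : 0 < L.length := List.length_pos_iff.mpr hne
  obtain ⟨hn1, hn2, hdisj2⟩ := List.nodup_append'.mp hdisj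
  have hfst : ∀ j k (hj : j < L.length) (hk : k < L.length),
      (L.get ⟨j, hj⟩).1 = (L.get ⟨k, hk⟩).1 → j = k := by
    intro j k hj hk hEq
    have h2 : (L.map Prod.fst)[j]'(by simpa using hj) = (L.map Prod.fst)[k]'(by simpa using hk) := by
      simpa [List.getElem_map] using hEq
    exact hn1.getElem_inj_iff.mp h2
  have hsnd : ∀ j k (hj : j < L.length) (hk : k < L.length),
      (L.get ⟨j, hj⟩).2 = (L.get ⟨k, hk⟩).2 → j = k := by
    intro j k hj hk hEq
    have h2 : (L.map Prod.snd)[j]'(by simpa using hj) = (L.map Prod.snd)[k]'(by simpa using hk) := by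
      simpa [List.getElem_map] using hEq
    exact hn2.getElem_inj_iff.mp h2
  have hmix : ∀ j k (hj : j < L.length) (hk : k < L.length),
      (L.get ⟨j, hj⟩).1 ≠ (L.get ⟨k, hk⟩).2 := by
    intro j k hj hk hEq
    refine hdisj2 (a := (L.get ⟨j, hj⟩).1) ?_ ?_
    · exact List.mem_map.mpr ⟨_, L.get_mem ⟨j, hj⟩, rfl⟩
    · rw [hEq]; exact List.mem_map.mpr ⟨_, L.get_mem ⟨k, hk⟩, rfl⟩
  have key : ∀ i (h : i < L.length), 0 < i →
      ∃ j, ∃ hj : j < L.length, j < i ∧ Crosses (L.get ⟨j, hj⟩) (L.get ⟨i, h⟩) := by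
    intro i h hi
    have hxy : (L.get ⟨i, h⟩).1 < (L.get ⟨i, h⟩).2 := horder _ (L.get_mem ⟨i, h⟩)
    have hs := hpin i h hi
    rcases hs with ⟨hx, hy⟩ | ⟨hy, hx⟩
    · -- first endpoint in shadow, second out
      obtain ⟨e, he, h1, h2⟩ := cover L hpin i hi (le_of_lt h) _ hx
      obtain ⟨j, hj, hji, rfl⟩ := memTake.mp he
      have hne1 : (L.get ⟨j, hj⟩).1 ≠ (L.get ⟨i, h⟩).1 := by
        intro hEq; exact absurd (hfst j i hj h hEq) (by omega)
      have hne2 : (L.get ⟨i, h⟩).1 ≠ (L.get ⟨j, hj⟩).2 := hmix i j h hj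
      have h12 : (L.get ⟨j, hj⟩).1 < (L.get ⟨i, h⟩).1 := lt_of_le_of_ne h1 hne1
      have h22 : (L.get ⟨i, h⟩).1 < (L.get ⟨j, hj⟩).2 := lt_of_le_of_ne h2 hne2
      have h3 : (L.get ⟨j, hj⟩).2 < (L.get ⟨i, h⟩).2 := by
        by_contra hcon
        push_neg at hcon
        exact hy ⟨⟨_, he, by omega⟩, ⟨_, he, hcon⟩⟩
      exact ⟨j, hj, hji, Or.inl ⟨h12, h22, h3⟩⟩
    · -- second endpoint in shadow, first out
      obtain ⟨e, he, h1, h2⟩ := cover L hpin i hi (le_of_lt h) _ hy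
      obtain ⟨j, hj, hji, rfl⟩ := memTake.mp he
      have hne1 : (L.get ⟨j, hj⟩).1 ≠ (L.get ⟨i, h⟩).2 := hmix j i hj h
      have hne2 : (L.get ⟨i, h⟩).2 ≠ (L.get ⟨j, hj⟩).2 := by
        intro hEq; exact absurd (hsnd i j h hj hEq) (by omega)
      have h12 : (L.get ⟨j, hj⟩).1 < (L.get ⟨i, h⟩).2 := lt_of_le_of_ne h1 hne1
      have h22 : (L.get ⟨i, h⟩).2 < (L.get ⟨j, hj⟩).2 := lt_of_le_of_ne h2 hne2
      have h3 : (L.get ⟨i, h⟩).1 < (L.get ⟨j, hj⟩).1 := by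
        by_contra hcon
        push_neg at hcon
        exact hx ⟨⟨_, he, hcon⟩, ⟨_, he, by omega⟩⟩
      exact ⟨j, hj, hji, Or.inr ⟨h3, h12, h22⟩⟩
  refine ⟨key, ?_⟩
  have hreach : ∀ n (hn : n < L.length),
      (SimpleGraph.fromRel fun s t : Fin L.length => Crosses (L.get s) (L.get t)).Reachable
        ⟨n, hn⟩ ⟨0, hlen⟩ := by
    intro n
    induction n using Nat.strong_induction_on with
    | _ n ih =>
      intro hn
      rcases Nat.eq_zero_or_pos n with rfl | hpos
      · exact SimpleGraph.Reachable.refl _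
      · obtain ⟨j, hj, hji, hc⟩ := key n hn hpos
        have hadj : (SimpleGraph.fromRel fun s t : Fin L.length =>
            Crosses (L.get s) (L.get t)).Adj ⟨n, hn⟩ ⟨j, hj⟩ := by
          rw [SimpleGraph.fromRel_adj]
          refine ⟨?_, Or.inr hc⟩
          simp only [ne_eq, Fin.mk.injEq]
          omega
        exact hadj.reachable.trans (ih j hji hj)
  have : Nonempty (Fin L.length) := ⟨⟨0, hlen⟩⟩
  exact SimpleGraph.Connected.mk fun a b => (hreach a.1 a.2).trans (hreach b.1 b.2).symm
end

section
/- The right-broken nesting on [2n] (edges n ~ 2n and i ~ 2n-i for i in [n-1]) and the left-broken nesting on [2n] (edges 1 ~ n+1 and i+1 ~ 2n-i+1 for i in [n-1]) are indecomposable matchings for every n ≥ 2. -/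
lemma mem_RBN {n : ℕ} {e : ℕ × ℕ} :
    e ∈ RightBrokenNesting n ↔
      e = (n, 2 * n) ∨ ∃ k, 1 ≤ k ∧ k ≤ n - 1 ∧ e = (k, 2 * n - k) := by
  simp only [RightBrokenNesting, Finset.mem_insert, Finset.mem_image, Finset.mem_Icc]
  constructor
  · rintro (h | ⟨k, ⟨hk1, hk2⟩, rfl⟩)
    · exact Or.inl h
    · exact Or.inr ⟨k, hk1, hk2, rfl⟩
  · rintro (h | ⟨k, hk1, hk2, rfl⟩)
    · exact Or.inl h
    · exact Or.inr ⟨k, ⟨hk1, hk2⟩, rfl⟩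

lemma mem_LBN {n : ℕ} {e : ℕ × ℕ} :
    e ∈ LeftBrokenNesting n ↔
      e = (1, n + 1) ∨ ∃ k, 1 ≤ k ∧ k ≤ n - 1 ∧ e = (k + 1, 2 * n - k + 1) := by
  simp only [LeftBrokenNesting, Finset.mem_insert, Finset.mem_image, Finset.mem_Icc]
  constructor
  · rintro (h | ⟨k, ⟨hk1, hk2⟩, rfl⟩)
    · exact Or.inl h
    · exact Or.inr ⟨k, hk1, hk2, rfl⟩
  · rintro (h | ⟨k, hk1, hk2, rfl⟩)
    · exact Or.inl h
    · exact Or.inr ⟨k, ⟨hk1, hk2⟩, rfl⟩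

lemma matching_RBN {n : ℕ} (hn : 2 ≤ n) : IsMatching n (RightBrokenNesting n) := by
  constructor
  · rintro ⟨a, b⟩ he
    rw [mem_RBN] at he
    simp only [Prod.mk.injEq] at he
    rcases he with ⟨rfl, rfl⟩ | ⟨k, hk1, hk2, rfl, rfl⟩ <;> omega
  · intro v hv
    rw [Finset.mem_Icc] at hv
    by_cases h1 : v ≤ n - 1
    · refine ⟨(v, 2 * n - v),
        ⟨mem_RBN.2 (Or.inr ⟨v, by omega, h1, rfl⟩), Or.inl rfl⟩, ?_⟩
      rintro ⟨a, b⟩ ⟨he, hv'⟩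
      rw [mem_RBN] at he
      simp only [Prod.mk.injEq] at he hv' ⊢
      rcases he with ⟨rfl, rfl⟩ | ⟨k, hk1, hk2, rfl, rfl⟩ <;> omega
    · by_cases h2 : v = n ∨ v = 2 * n
      · refine ⟨(n, 2 * n), ⟨mem_RBN.2 (Or.inl rfl), by omega⟩, ?_⟩
        rintro ⟨a, b⟩ ⟨he, hv'⟩
        rw [mem_RBN] at he
        simp only [Prod.mk.injEq] at he hv' ⊢
        rcases he with ⟨rfl, rfl⟩ | ⟨k, hk1, hk2, rfl, rfl⟩ <;> omega
      · refine ⟨(2 * n - v, v),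
          ⟨mem_RBN.2 (Or.inr ⟨2 * n - v, by omega, by omega,
            by rw [Prod.mk.injEq]; omega⟩), Or.inr rfl⟩, ?_⟩
        rintro ⟨a, b⟩ ⟨he, hv'⟩
        rw [mem_RBN] at he
        simp only [Prod.mk.injEq] at he hv' ⊢
        rcases he with ⟨rfl, rfl⟩ | ⟨k, hk1, hk2, rfl, rfl⟩ <;> omega

lemma matching_LBN {n : ℕ} (hn : 2 ≤ n) : IsMatching n (LeftBrokenNesting n) := by
  constructor
  · rintro ⟨a, b⟩ he
    rw [mem_LBN] at he
    simp only [Prod.mk.injEq] at he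
    rcases he with ⟨rfl, rfl⟩ | ⟨k, hk1, hk2, rfl, rfl⟩ <;> omega
  · intro v hv
    rw [Finset.mem_Icc] at hv
    by_cases h1 : v = 1 ∨ v = n + 1
    · refine ⟨(1, n + 1), ⟨mem_LBN.2 (Or.inl rfl), by omega⟩, ?_⟩
      rintro ⟨a, b⟩ ⟨he, hv'⟩
      rw [mem_LBN] at he
      simp only [Prod.mk.injEq] at he hv' ⊢
      rcases he with ⟨rfl, rfl⟩ | ⟨k, hk1, hk2, rfl, rfl⟩ <;> omega
    · by_cases h2 : v ≤ n
      · refine ⟨(v, 2 * n - (v - 1) + 1),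
          ⟨mem_LBN.2 (Or.inr ⟨v - 1, by omega, by omega,
            by rw [Prod.mk.injEq]; omega⟩), Or.inl rfl⟩, ?_⟩
        rintro ⟨a, b⟩ ⟨he, hv'⟩
        rw [mem_LBN] at he
        simp only [Prod.mk.injEq] at he hv' ⊢
        rcases he with ⟨rfl, rfl⟩ | ⟨k, hk1, hk2, rfl, rfl⟩ <;> omega
      · refine ⟨(2 * n - v + 2, v),
          ⟨mem_LBN.2 (Or.inr ⟨2 * n - v + 1, by omega, by omega,
            by rw [Prod.mk.injEq]; omega⟩), Or.inr rfl⟩, ?_⟩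
        rintro ⟨a, b⟩ ⟨he, hv'⟩
        rw [mem_LBN] at he
        simp only [Prod.mk.injEq] at he hv' ⊢
        rcases he with ⟨rfl, rfl⟩ | ⟨k, hk1, hk2, rfl, rfl⟩ <;> omega

lemma indec_RBN {n : ℕ} (hn : 2 ≤ n) : Indecomposable n (RightBrokenNesting n) := by
  intro i j hi hij hj hint
  have A : ∀ k, 1 ≤ k → k ≤ n - 1 →
      ((i ≤ k ∧ k ≤ j) ↔ (i ≤ 2 * n - k ∧ 2 * n - k ≤ j)) := fun k hk1 hk2 =>
    hint (k, 2 * n - k) (mem_RBN.2 (Or.inr ⟨k, hk1, hk2, rfl⟩))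
  have hN : (i ≤ n ∧ n ≤ j) ↔ (i ≤ 2 * n ∧ 2 * n ≤ j) :=
    hint (n, 2 * n) (mem_RBN.2 (Or.inl rfl))
  by_cases hc : i ≤ n - 1
  · -- edge (i, 2n - i) forces j ≥ 2n - i ≥ n + 1
    have h1 := (A i hi hc).1 ⟨le_rfl, hij⟩
    -- edge (n, 2n): n ∈ [i,j] so 2n ∈ [i,j], hence j = 2n
    have h2 := hN.1 ⟨by omega, by omega⟩
    -- edge (1, 2n-1): 2n - 1 ∈ [i,j] so 1 ∈ [i,j], hence i = 1
    have h3 := (A 1 le_rfl (by omega)).2 ⟨by omega, by omega⟩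
    omega
  · by_cases hc2 : i ≤ n
    · -- i = n : edge (n, 2n) gives j = 2n, then edge (n-1, n+1) contradicts
      have h2 := hN.1 ⟨by omega, by omega⟩
      have h3 := (A (n - 1) (by omega) le_rfl).2 ⟨by omega, by omega⟩
      omega
    · by_cases hc3 : i ≤ 2 * n - 1
      · -- n + 1 ≤ i ≤ 2n - 1 : edge (2n - i, i) contradicts
        have h4 := (A (2 * n - i) (by omega) (by omega)).2 ⟨by omega, by omega⟩
        omega
      · -- i = 2n : edge (n, 2n) contradicts
        have h2 := hN.2 ⟨by omega, by omega⟩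
        omega

lemma indec_LBN {n : ℕ} (hn : 2 ≤ n) : Indecomposable n (LeftBrokenNesting n) := by
  intro i j hi hij hj hint
  have A : ∀ k, 1 ≤ k → k ≤ n - 1 →
      ((i ≤ k + 1 ∧ k + 1 ≤ j) ↔ (i ≤ 2 * n - k + 1 ∧ 2 * n - k + 1 ≤ j)) := fun k hk1 hk2 =>
    hint (k + 1, 2 * n - k + 1) (mem_LBN.2 (Or.inr ⟨k, hk1, hk2, rfl⟩))
  have hN : (i ≤ 1 ∧ 1 ≤ j) ↔ (i ≤ n + 1 ∧ n + 1 ≤ j) :=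
    hint (1, n + 1) (mem_LBN.2 (Or.inl rfl))
  by_cases hc : i ≤ 1
  · -- i = 1 : edge (1, n+1) gives j ≥ n + 1
    have h1 := hN.1 ⟨hc, by omega⟩
    by_cases hj' : j ≤ 2 * n - 1
    · -- edge (2n - j + 1, j + 1) has left endpoint inside, right outside
      have h2 := (A (2 * n - j) (by omega) (by omega)).1 ⟨by omega, by omega⟩
      omega
    · omega
  · by_cases hc2 : i ≤ n
    · -- 2 ≤ i ≤ n : edge (i, 2n - i + 2) gives j ≥ 2n - i + 2 ≥ n + 2,
      -- then edge (1, n + 1) contradicts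
      have h1 := (A (i - 1) (by omega) (by omega)).1 ⟨by omega, by omega⟩
      have h2 := hN.2 ⟨by omega, by omega⟩
      omega
    · by_cases hc3 : i ≤ n + 1
      · -- i = n + 1 : edge (1, n + 1) contradicts
        have h2 := hN.2 ⟨by omega, by omega⟩
        omega
      · -- n + 2 ≤ i ≤ 2n : edge (2n - i + 2, i) contradicts
        have h4 := (A (2 * n - i + 1) (by omega) (by omega)).2 ⟨by omega, by omega⟩
        omega

theorem stmt13 (n : ℕ) (hn : 2 ≤ n) :
    (IsMatching n (RightBrokenNesting n) ∧ Indecomposable n (RightBrokenNesting n)) ∧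
      (IsMatching n (LeftBrokenNesting n) ∧ Indecomposable n (LeftBrokenNesting n)) := by
  exact ⟨⟨matching_RBN hn, indec_RBN hn⟩, ⟨matching_LBN hn, indec_LBN hn⟩⟩
end
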